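/- arXiv:1908.07217 — 4 statements merged into one kernel-verified Lean document; each statement's English description precedes it below -/
import Mathlib

section
/- Let A ⊆ B be a C*-inclusion, E : B → A a conditional expectation, and M ⊆ B a slice with E(M) ⊆ M. Then E(M) = M ∩ A, and M ∩ A is a complemented closed two-sided ideal in the C*-algebra J, where J is the closed linear span of {m*·n : m, n ∈ M}: there is a closed two-sided ideal K of J with (M ∩ A) ∩ K = {0} and (M ∩ A) + K = J. -/
open scoped MultiplierAlgebra

noncomputable section

namespace NCCartan

variable {B : Type*} [NonUnitalCStarAlgebra B] [PartialOrder B] [StarOrderedRing B]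

/-- A closed two-sided ideal of the C*-subalgebra of `B` with carrier `A`. -/
structure CIdealIn (A : Set B) where
  carrier : Set B
  subset : carrier ⊆ A
  zero_mem : (0 : B) ∈ carrier
  add_mem : ∀ x ∈ carrier, ∀ y ∈ carrier, x + y ∈ carrier
  smul_mem : ∀ (c : ℂ), ∀ x ∈ carrier, c • x ∈ carrier
  mul_left : ∀ a ∈ A, ∀ x ∈ carrier, a * x ∈ carrier
  mul_right : ∀ a ∈ A, ∀ x ∈ carrier, x * a ∈ carrier
  isClosed : IsClosed carrier

/-- The inclusion `A ⊆ B` is non-degenerate: the closed linear span of `A·B` is all of `B`. -/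
def Nondegenerate (A : Set B) : Prop :=
  Dense ((Submodule.span ℂ {x : B | ∃ a ∈ A, ∃ b : B, x = a * b} : Submodule ℂ B) : Set B)

/-- `b` is a normaliser of `A` in `B`. -/
def IsNormalizerOf (A : Set B) (b : B) : Prop :=
  (∀ a ∈ A, b * a * star b ∈ A) ∧ (∀ a ∈ A, star b * a * b ∈ A)

/-- The inclusion `A ⊆ B` is regular: it is non-degenerate and the linear span of the
normalisers is dense in `B`. -/
def RegularInclusion (A : Set B) : Prop :=
  Nondegenerate A ∧
    Dense ((Submodule.span ℂ {b : B | IsNormalizerOf A b} : Submodule ℂ B) : Set B)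

/-- A conditional expectation from `B` onto the C*-subalgebra with carrier `A`. -/
structure CondExp (A : Set B) where
  toFun : B →ₗ[ℂ] B
  mem_range : ∀ b : B, toFun b ∈ A
  fixes : ∀ a ∈ A, toFun a = a
  contractive : ∀ b : B, ‖toFun b‖ ≤ ‖b‖
  positive : ∀ b : B, 0 ≤ b → 0 ≤ toFun b
  bimodule : ∀ a ∈ A, ∀ c ∈ A, ∀ b : B, toFun (a * b * c) = a * toFun b * c

/-- `E` is faithful: `E(b* b) = 0` implies `b = 0`. -/
def CondExp.Faithful {A : Set B} (E : CondExp A) : Prop :=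
  ∀ b : B, E.toFun (star b * b) = 0 → b = 0

/-- `E` is almost faithful: `E((b c)* (b c)) = 0` for all `c` implies `b = 0`. -/
def CondExp.AlmostFaithful {A : Set B} (E : CondExp A) : Prop :=
  ∀ b : B, (∀ c : B, E.toFun (star (b * c) * (b * c)) = 0) → b = 0

/-- The set `IBI`: the closed linear span of `{x b y : x, y ∈ I, b ∈ B}`. -/
def IBISet (I : Set B) : Set B :=
  closure ((Submodule.span ℂ {z : B | ∃ p ∈ I, ∃ b : B, ∃ q ∈ I, z = p * b * q} :
    Submodule ℂ B) : Set B)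

/-- A conditional expectation from the C*-subalgebra of `B` with carrier `C` onto the
ideal with carrier `I ⊆ C`; only the values of `toFun` on `C` are relevant. -/
structure CondExpOnSub (C : Set B) (I : Set B) where
  toFun : B → B
  map_add : ∀ x ∈ C, ∀ y ∈ C, toFun (x + y) = toFun x + toFun y
  map_smul : ∀ (c : ℂ), ∀ x ∈ C, toFun (c • x) = c • toFun x
  mem_range : ∀ x ∈ C, toFun x ∈ I
  fixes : ∀ x ∈ I, toFun x = x
  contractive : ∀ x ∈ C, ‖toFun x‖ ≤ ‖x‖
  positive : ∀ x ∈ C, 0 ≤ x → 0 ≤ toFun x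
  bimodule : ∀ p ∈ I, ∀ q ∈ I, ∀ b ∈ C, toFun (p * b * q) = p * toFun b * q

def CondExpOnSub.Faithful {C I : Set B} (P : CondExpOnSub C I) : Prop :=
  ∀ x ∈ C, P.toFun (star x * x) = 0 → x = 0

def CondExpOnSub.AlmostFaithful {C I : Set B} (P : CondExpOnSub C I) : Prop :=
  ∀ x ∈ C, (∀ c ∈ C, P.toFun (star (x * c) * (x * c)) = 0) → x = 0

/-- A virtual commutant of `A` in `B` defined on the ideal with carrier `I`;
only the values of `toFun` on `I` are relevant. -/
structure VirtualCommutant (A : Set B) (I : Set B) where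
  toFun : B → B
  map_add : ∀ x ∈ I, ∀ y ∈ I, toFun (x + y) = toFun x + toFun y
  map_smul : ∀ (c : ℂ), ∀ x ∈ I, toFun (c • x) = c • toFun x
  left_mod : ∀ a ∈ A, ∀ x ∈ I, toFun (a * x) = a * toFun x
  right_mod : ∀ a ∈ A, ∀ x ∈ I, toFun (x * a) = toFun x * a

/-- A slice for the inclusion `A ⊆ B`: a closed linear subspace `M` with `A·M ⊆ M`,
`M·A ⊆ M`, `M*·M ⊆ A` and `M·M* ⊆ A`. -/
structure IsSlice (A : Set B) (M : Submodule ℂ B) : Prop where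
  isClosed : IsClosed (M : Set B)
  mul_left : ∀ a ∈ A, ∀ m ∈ M, a * m ∈ M
  mul_right : ∀ a ∈ A, ∀ m ∈ M, m * a ∈ M
  star_mul_mem : ∀ m ∈ M, ∀ n ∈ M, star m * n ∈ A
  mul_star_mem : ∀ m ∈ M, ∀ n ∈ M, m * star n ∈ A

/-- An isomorphism of Hilbert `A`-bimodules from the ideal with carrier `I` onto the
subset `M` of `B`; only the values of `toFun` on `I` are relevant. -/
structure HilbertBimoduleIso (A : Set B) (I : Set B) (M : Set B) where
  toFun : B → B
  map_add : ∀ x ∈ I, ∀ y ∈ I, toFun (x + y) = toFun x + toFun y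
  map_smul : ∀ (c : ℂ), ∀ x ∈ I, toFun (c • x) = c • toFun x
  maps_into : ∀ x ∈ I, toFun x ∈ M
  injOn : ∀ x ∈ I, ∀ y ∈ I, toFun x = toFun y → x = y
  surjOn : ∀ m ∈ M, ∃ x ∈ I, toFun x = m
  bimod : ∀ a ∈ A, ∀ b ∈ A, ∀ x ∈ I, toFun (a * x * b) = a * toFun x * b
  inner_right : ∀ x ∈ I, ∀ y ∈ I, star (toFun x) * toFun y = star x * y
  inner_left : ∀ x ∈ I, ∀ y ∈ I, toFun x * star (toFun y) = x * star y

/-- A hereditary C*-subalgebra `D` of the C*-subalgebra with carrier `A`. -/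
structure IsHereditarySubalgebra (A : Set B) (D : Set B) : Prop where
  subset : D ⊆ A
  zero_mem : (0 : B) ∈ D
  add_mem : ∀ x ∈ D, ∀ y ∈ D, x + y ∈ D
  smul_mem : ∀ (c : ℂ), ∀ x ∈ D, c • x ∈ D
  mul_mem : ∀ x ∈ D, ∀ y ∈ D, x * y ∈ D
  star_mem : ∀ x ∈ D, star x ∈ D
  isClosed : IsClosed D
  hereditary : ∀ x ∈ A, ∀ a ∈ D, 0 ≤ x → x ≤ a → x ∈ D

/-- Kishimoto's condition for an element `y ∈ B` relative to `A`. -/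
def Kishimoto (A : Set B) (y : B) : Prop :=
  ∀ D : Set B, IsHereditarySubalgebra A D → D ≠ {0} → ∀ ε : ℝ, 0 < ε →
    ∃ a ∈ D, 0 ≤ a ∧ ‖a‖ = 1 ∧ ‖a * y * a‖ < ε

/-- The inclusion `A ⊆ B` is aperiodic. -/
def AperiodicInclusion (A : Set B) : Prop :=
  ∀ b : B, ∀ D : Set B, IsHereditarySubalgebra A D → D ≠ {0} → ∀ ε : ℝ, 0 < ε →
    ∃ a ∈ D, 0 ≤ a ∧ ‖a‖ = 1 ∧ Metric.infDist (a * b * a) A < ε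

/-- Every virtual commutant of `A` in `B` has range contained in `A`. -/
def VirtualCommutantsTrivial (A : Set B) : Prop :=
  ∀ I : CIdealIn A, ∀ φ : VirtualCommutant A I.carrier, ∀ x ∈ I.carrier, φ.toFun x ∈ A

/-- For every closed two-sided ideal `I` of `A`, every multiplier of `IBI` commuting with `I`
maps `I` into `I`. -/
def CommutingMultipliersTrivial (A : Set B) : Prop :=
  ∀ I : CIdealIn A, ∀ C : NonUnitalStarSubalgebra ℂ B, (C : Set B) = IBISet I.carrier →
    ∀ τ : 𝓜(ℂ, C), (∀ x : C, (x : B) ∈ I.carrier → τ.fst x = τ.snd x) →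
      ∀ x : C, (x : B) ∈ I.carrier → ((τ.fst x : C) : B) ∈ I.carrier

/-- Every slice isomorphic as a Hilbert `A`-bimodule to a closed two-sided ideal `I` of `A`
equals `I`. -/
def SlicesIsoIdealsTrivial (A : Set B) : Prop :=
  ∀ I : CIdealIn A, ∀ M : Submodule ℂ B, IsSlice A M →
    Nonempty (HilbertBimoduleIso A I.carrier (M : Set B)) → (M : Set B) = I.carrier

/-- `E` is faithful and, for every closed two-sided ideal `I` of `A`, the restriction of `E`
to `IBI` is the only conditional expectation from `IBI` onto `I`. -/
def UniqueExpectationOnIdeals (A : Set B) (E : CondExp A) : Prop :=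
  E.Faithful ∧ ∀ I : CIdealIn A,
    (∃ P : CondExpOnSub (IBISet I.carrier) I.carrier,
      ∀ x ∈ IBISet I.carrier, P.toFun x = E.toFun x) ∧
    (∀ P : CondExpOnSub (IBISet I.carrier) I.carrier,
      ∀ x ∈ IBISet I.carrier, P.toFun x = E.toFun x)

/-- For every closed two-sided ideal `I` of `A` there is exactly one faithful conditional
expectation from `IBI` onto `I`. -/
def UniqueFaithfulExpectationOnIdeals (A : Set B) : Prop :=
  ∀ I : CIdealIn A,
    ∃ P : CondExpOnSub (IBISet I.carrier) I.carrier, P.Faithful ∧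
      ∀ Q : CondExpOnSub (IBISet I.carrier) I.carrier, Q.Faithful →
        ∀ x ∈ IBISet I.carrier, Q.toFun x = P.toFun x

/-- `A ⊆ B` is a noncommutative Cartan subalgebra in the sense of Exel. -/
def IsNCCartan (A : Set B) : Prop :=
  RegularInclusion A ∧ (∃ E : CondExp A, E.AlmostFaithful) ∧ VirtualCommutantsTrivial A

/-- `A` detects ideals in `B`. -/
def DetectsIdeals (A : Set B) : Prop :=
  ∀ J : CIdealIn (Set.univ : Set B), J.carrier ≠ {0} → J.carrier ∩ A ≠ {0}

/-- `A` supports `B`. -/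
def Supports (A : Set B) : Prop :=
  ∀ b : B, 0 ≤ b → b ≠ 0 → ∃ a ∈ A, 0 ≤ a ∧ a ≠ 0 ∧
    ∀ ε : ℝ, 0 < ε → ∃ x : B, ‖star x * b * x - a‖ < ε

/-- The C*-algebra with carrier `A` is prime: any two nonzero closed two-sided ideals have
nonzero intersection. -/
def IsPrimeCStarSet (A : Set B) : Prop :=
  ∀ I J : CIdealIn A, I.carrier ≠ {0} → J.carrier ≠ {0} → I.carrier ∩ J.carrier ≠ {0}

end NCCartan

open NCCartan


section AuxAnalysis

open scoped CStarAlgebra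
open Unitization Filter Topology

variable {B : Type*} [NonUnitalCStarAlgebra B] [PartialOrder B] [StarOrderedRing B]

/-- Approximate-unit sequence built from a positive element `h`. -/
def auSeq (R : ℝ) (h : B) : ℕ → B
  | 0 => 0
  | k+1 => auSeq R h k + R⁻¹ • (h - h * auSeq R h k)

lemma auSeq_one_sub (R : ℝ) (h : B) (k : ℕ) :
    (1 : B⁺¹) - ((auSeq R h k : B) : B⁺¹) = ((1 : B⁺¹) - R⁻¹ • (h : B⁺¹)) ^ k := by
  induction k with
  | zero => simp [auSeq]
  | succ k ih =>
    have : ((auSeq R h (k+1) : B) : B⁺¹)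
        = ((auSeq R h k : B) : B⁺¹) + R⁻¹ • ((h : B⁺¹) - (h : B⁺¹) * ((auSeq R h k : B) : B⁺¹)) := by
      simp [auSeq, inr_add, inr_smul, inr_sub, inr_mul]
    rw [this, pow_succ']
    rw [← ih]
    rw [mul_one_sub, sub_mul, one_mul, smul_sub, smul_mul_assoc]
    abel


lemma real_bound {R t : ℝ} (hR : 0 < R) (ht : 0 ≤ t) (htR : t ≤ R) (k : ℕ) (hk : k ≠ 0) :
    ‖t * (1 - R⁻¹ * t) ^ (2 * k)‖ ≤ R / (2 * k) := by
  set s : ℝ := R⁻¹ * t with hs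
  have hs0 : 0 ≤ s := by positivity
  have hRs : R * s = t := by
    rw [hs, ← mul_assoc, mul_inv_cancel₀ hR.ne', one_mul]
  have hs1 : s ≤ 1 := by
    rw [hs]
    calc R⁻¹ * t ≤ R⁻¹ * R := by gcongr
    _ = 1 := inv_mul_cancel₀ hR.ne'
  have h1 : 0 ≤ 1 - s := by linarith
  have hkpos : (0:ℝ) < (2 * k : ℕ) := by
    have : 0 < 2 * k := by omega
    exact_mod_cast this
  have hBern : 1 + (2 * k : ℕ) * s ≤ (1 + s) ^ (2 * k) :=
    one_add_mul_le_pow (by linarith) (2 * k)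
  have hprod : (1 - s) ^ (2 * k) * (1 + s) ^ (2 * k) ≤ 1 := by
    rw [← mul_pow]
    have h2 : (1 - s) * (1 + s) = 1 - s ^ 2 := by ring
    rw [h2]
    exact pow_le_one₀ (by nlinarith) (by nlinarith)
  have hpos : (0:ℝ) < 1 + (2 * k : ℕ) * s := by
    have := mul_nonneg hkpos.le hs0
    linarith
  have h2 : (1 - s) ^ (2 * k) * (1 + (2 * k : ℕ) * s) ≤ 1 :=
    le_trans (mul_le_mul_of_nonneg_left hBern (pow_nonneg h1 _)) hprod
  have hles : (1 - s) ^ (2 * k) ≤ (1 + (2 * k : ℕ) * s)⁻¹ := by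
    rw [← one_div, le_div_iff₀ hpos]
    exact h2
  have hfin : t * (1 - s) ^ (2 * k) ≤ R / (2 * k : ℕ) := by
    calc t * (1 - s) ^ (2 * k) ≤ t * (1 + (2 * k : ℕ) * s)⁻¹ := by gcongr
    _ = t / (1 + (2 * k : ℕ) * s) := by rw [div_eq_mul_inv]
    _ ≤ R / (2 * k : ℕ) := by
        rw [div_le_div_iff₀ hpos hkpos]
        have : R * (1 + (2 * k : ℕ) * s) = R + (2 * k : ℕ) * t := by
          rw [mul_add, mul_one, mul_comm R, mul_assoc, mul_comm s R, hRs]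
        rw [this]
        linarith
  have hnn : 0 ≤ t * (1 - s) ^ (2 * k) := mul_nonneg ht (pow_nonneg h1 _)
  rw [Real.norm_eq_abs, abs_of_nonneg hnn]
  exact_mod_cast hfin

lemma key_bound (h : B) (hh : 0 ≤ h) (k : ℕ) (hk : k ≠ 0) :
    ‖(h : B⁺¹) * ((1 : B⁺¹) - (‖h‖+1)⁻¹ • (h : B⁺¹)) ^ (2*k)‖ ≤ (‖h‖+1)/(2*k) := by
  set R : ℝ := ‖h‖ + 1 with hRdef
  have hR : 0 < R := by positivity
  have hh' : 0 ≤ (h : B⁺¹) := inr_nonneg_iff.mpr hh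
  have hsa : IsSelfAdjoint (h : B⁺¹) := .of_nonneg hh'
  have e1 : ((1:B⁺¹) - R⁻¹ • (h:B⁺¹)) = cfc (fun t : ℝ => 1 - R⁻¹ * t) (h:B⁺¹) := by
    rw [cfc_sub _ _ _, cfc_const_one ℝ _, cfc_const_mul _ _ _, cfc_id' ℝ _]
  have e2 : (h:B⁺¹) * ((1:B⁺¹) - R⁻¹ • (h:B⁺¹))^(2*k)
      = cfc (fun t : ℝ => t * (1 - R⁻¹*t)^(2*k)) (h:B⁺¹) := by
    rw [cfc_mul _ _ _, cfc_pow _ _ _, cfc_id' ℝ _, ← e1]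
  rw [e2]
  apply norm_cfc_le (by positivity)
  intro t ht
  have ht0 : 0 ≤ t := spectrum_nonneg_of_nonneg hh' ht
  have htR : t ≤ R := by
    have h1 : ‖t‖ ≤ ‖(h : B⁺¹)‖ := spectrum.norm_le_norm_of_mem ht
    rw [Unitization.norm_inr] at h1
    rw [Real.norm_eq_abs, abs_of_nonneg ht0] at h1
    linarith
  exact real_bound hR ht0 htR k hk

@[simp] lemma auSeq_zero (R : ℝ) (h : B) : auSeq R h 0 = 0 := rfl
lemma auSeq_succ (R : ℝ) (h : B) (k : ℕ) :
    auSeq R h (k+1) = auSeq R h k + R⁻¹ • (h - h * auSeq R h k) := rfl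

lemma auSeq_commute (R : ℝ) (h : B) (k : ℕ) : Commute h (auSeq R h k) := by
  induction k with
  | zero => simp [auSeq]
  | succ k ih =>
    rw [auSeq_succ]
    exact (ih.add_right (((Commute.refl h).sub_right ((Commute.refl h).mul_right ih)).smul_right R⁻¹))

lemma auSeq_isSelfAdjoint (R : ℝ) (h : B) (hh : IsSelfAdjoint h) (k : ℕ) :
    IsSelfAdjoint (auSeq R h k) := by
  induction k with
  | zero => simp [auSeq]
  | succ k ih =>
    rw [auSeq_succ, IsSelfAdjoint, star_add, ih.star_eq, star_smul, star_trivial, star_sub,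
      hh.star_eq, star_mul, ih.star_eq, hh.star_eq, (auSeq_commute R h k).eq]

lemma sq_bound_right (h y : B) (hh : 0 ≤ h) (hy : star y * y ≤ h) (k : ℕ) (hk : k ≠ 0) :
    ‖y - y * auSeq (‖h‖+1) h k‖ * ‖y - y * auSeq (‖h‖+1) h k‖ ≤ (‖h‖+1)/(2*k) := by
  set R : ℝ := ‖h‖ + 1 with hRdef
  set u : B := auSeq R h k with hu
  set w : B⁺¹ := (1:B⁺¹) - R⁻¹ • (h:B⁺¹) with hw
  have hh' : 0 ≤ (h : B⁺¹) := inr_nonneg_iff.mpr hh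
  have hsa : IsSelfAdjoint (h : B⁺¹) := .of_nonneg hh'
  have hw_sa : IsSelfAdjoint w := by
    rw [IsSelfAdjoint, hw, star_sub, star_one, star_smul, star_trivial, hsa.star_eq]
  have hwk_sa : IsSelfAdjoint (w ^ k) := hw_sa.pow k
  set x : B := y - y * u with hx
  have hx' : (x : B⁺¹) = (y : B⁺¹) * w ^ k := by
    rw [hx, inr_sub ℂ, inr_mul ℂ, ← auSeq_one_sub, mul_sub, mul_one]
  have hxx : ((star x * x : B) : B⁺¹) = w ^ k * ((star y * y : B) : B⁺¹) * w ^ k := by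
    rw [inr_mul ℂ, inr_star, hx', star_mul, hwk_sa.star_eq, inr_mul ℂ, inr_star]
    noncomm_ring
  have hyy' : ((star y * y : B) : B⁺¹) ≤ (h : B⁺¹) :=
    (inr_le_iff _ _ (IsSelfAdjoint.star_mul_self y) (IsSelfAdjoint.of_nonneg hh)).mpr hy
  have hconj : w ^ k * ((star y * y : B) : B⁺¹) * w ^ k ≤ w ^ k * (h : B⁺¹) * w ^ k :=
    hwk_sa.conjugate_le_conjugate hyy'
  have hcomm : Commute ((h : B⁺¹)) w := by
    rw [hw]
    exact (Commute.one_right _).sub_right ((Commute.refl _).smul_right R⁻¹)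
  have hrw : w ^ k * (h : B⁺¹) * w ^ k = (h : B⁺¹) * w ^ (2*k) := by
    rw [(hcomm.pow_right k).symm.eq, mul_assoc, ← pow_add, two_mul]
  have hnorm : ‖x‖ * ‖x‖ = ‖((star x * x : B) : B⁺¹)‖ := by
    rw [Unitization.norm_inr, CStarRing.norm_star_mul_self]
  rw [hnorm]
  calc ‖((star x * x : B) : B⁺¹)‖ ≤ ‖w ^ k * (h : B⁺¹) * w ^ k‖ := by
        apply CStarAlgebra.norm_le_norm_of_nonneg_of_le
        · rw [inr_nonneg_iff]
          exact star_mul_self_nonneg x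
        · rw [hxx]; exact hconj
  _ ≤ R/(2*k) := by rw [hrw]; exact key_bound h hh k hk

lemma sq_bound_left (h y : B) (hh : 0 ≤ h) (hy : y * star y ≤ h) (k : ℕ) (hk : k ≠ 0) :
    ‖y - auSeq (‖h‖+1) h k * y‖ * ‖y - auSeq (‖h‖+1) h k * y‖ ≤ (‖h‖+1)/(2*k) := by
  have h2 : star (star y) * star y ≤ h := by rwa [star_star]
  have := sq_bound_right h (star y) hh h2 k hk
  have e : star y - star y * auSeq (‖h‖+1) h k = star (y - auSeq (‖h‖+1) h k * y) := by
    have hsa : IsSelfAdjoint (auSeq (‖h‖+1) h k) :=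
      auSeq_isSelfAdjoint _ h (IsSelfAdjoint.of_nonneg hh) k
    rw [star_sub, star_mul, hsa.star_eq]
  rw [e, norm_star] at this
  exact this

lemma tendsto_sqrt_aux (R : ℝ) : Tendsto (fun k : ℕ => Real.sqrt (R/(2*k))) atTop (𝓝 0) := by
  have h1 : Tendsto (fun k : ℕ => R/(2*k)) atTop (𝓝 0) := by
    have := tendsto_const_div_atTop_nhds_zero_nat (R/2)
    convert this using 2 with k
    rw [div_div]
  have h2 := (Real.continuous_sqrt.tendsto 0).comp h1
  rw [Real.sqrt_zero] at h2
  exact h2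

lemma norm_le_sqrt_of_sq {a : B} {c : ℝ} (h : ‖a‖ * ‖a‖ ≤ c) : ‖a‖ ≤ Real.sqrt c := by
  calc ‖a‖ = Real.sqrt (‖a‖ * ‖a‖) := (Real.sqrt_mul_self (norm_nonneg a)).symm
  _ ≤ Real.sqrt c := Real.sqrt_le_sqrt h

lemma auSeq_tendsto_right (h y : B) (hh : 0 ≤ h) (hy : star y * y ≤ h) :
    Tendsto (fun k => y * auSeq (‖h‖+1) h k) atTop (𝓝 y) := by
  rw [tendsto_iff_norm_sub_tendsto_zero]
  apply squeeze_zero' (Eventually.of_forall fun k => norm_nonneg _)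
    (g := fun k : ℕ => Real.sqrt ((‖h‖+1)/(2*k)))
  · filter_upwards [eventually_ge_atTop 1] with k hk
    rw [norm_sub_rev]
    exact norm_le_sqrt_of_sq (sq_bound_right h y hh hy k (by omega))
  · exact tendsto_sqrt_aux _

lemma auSeq_tendsto_left (h y : B) (hh : 0 ≤ h) (hy : y * star y ≤ h) :
    Tendsto (fun k => auSeq (‖h‖+1) h k * y) atTop (𝓝 y) := by
  rw [tendsto_iff_norm_sub_tendsto_zero]
  apply squeeze_zero' (Eventually.of_forall fun k => norm_nonneg _)
    (g := fun k : ℕ => Real.sqrt ((‖h‖+1)/(2*k)))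
  · filter_upwards [eventually_ge_atTop 1] with k hk
    rw [norm_sub_rev]
    exact norm_le_sqrt_of_sq (sq_bound_left h y hh hy k (by omega))
  · exact tendsto_sqrt_aux _


end AuxAnalysis

open Filter Topology


/-- Lemma 3.10: if a conditional expectation `E : B → A` maps a slice `M` into itself, then
`E(M) = M ∩ A` and `M ∩ A` is a complemented closed two-sided ideal in the C*-algebra `J`,
where `J` is the closed linear span of `M*·M`. -/

theorem statement_6 {B : Type*} [NonUnitalCStarAlgebra B] [PartialOrder B] [StarOrderedRing B]
    (A : NonUnitalStarSubalgebra ℂ B) [IsClosed (A : Set B)]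
    (E : CondExp (A : Set B))
    (M : Submodule ℂ B) (hM : IsSlice (A : Set B) M)
    (hEM : ∀ m ∈ M, E.toFun m ∈ M)
    (J : Set B)
    (hJ : J = closure ((Submodule.span ℂ
      {z : B | ∃ m ∈ M, ∃ n ∈ M, z = star m * n} : Submodule ℂ B) : Set B)) :
    (E.toFun '' (M : Set B) = (M : Set B) ∩ (A : Set B)) ∧
    (∃ I : CIdealIn J, I.carrier = (M : Set B) ∩ (A : Set B)) ∧
    (∃ K : CIdealIn J,
      ((M : Set B) ∩ (A : Set B)) ∩ K.carrier = {0} ∧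
      {z : B | ∃ x ∈ (M : Set B) ∩ (A : Set B), ∃ y ∈ K.carrier, z = x + y} = J) := by
  classical
  have hAclosed : IsClosed (A : Set B) := ‹_›
  have hsmulR : ∀ (r : ℝ) (x : B), r • x = (r : ℂ) • x := fun r x => by
    rw [← algebraMap_smul ℂ r x, Complex.coe_algebraMap]
  have hEc : Continuous fun b : B => E.toFun b :=
    (E.toFun.mkContinuous 1 (fun b => by simpa using E.contractive b)).continuous
  set SM : Submodule ℂ B := Submodule.span ℂ
      {z : B | ∃ m ∈ M, ∃ n ∈ M, z = star m * n} with hSMdef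
  set N : Set B := (M : Set B) ∩ (A : Set B) with hNdef
  have hNclosed : IsClosed N := hM.isClosed.inter hAclosed
  have hNzero : (0 : B) ∈ N := ⟨M.zero_mem, zero_mem A⟩
  have hNadd : ∀ x ∈ N, ∀ y ∈ N, x + y ∈ N := fun x hx y hy =>
    ⟨M.add_mem hx.1 hy.1, add_mem hx.2 hy.2⟩
  have hNsmul : ∀ (c : ℂ), ∀ x ∈ N, c • x ∈ N := fun c x hx =>
    ⟨M.smul_mem c hx.1, SMulMemClass.smul_mem c hx.2⟩
  have hNsmulR : ∀ (r : ℝ), ∀ x ∈ N, r • x ∈ N := fun r x hx => by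
    rw [hsmulR]; exact hNsmul _ x hx
  have hNsub : ∀ x ∈ N, ∀ y ∈ N, x - y ∈ N := fun x hx y hy =>
    ⟨M.sub_mem hx.1 hy.1, sub_mem hx.2 hy.2⟩
  have hNmulA : ∀ x ∈ N, ∀ a ∈ (A : Set B), x * a ∈ N := fun x hx a ha =>
    ⟨hM.mul_right a ha x hx.1, mul_mem hx.2 ha⟩
  have hAmulN : ∀ a ∈ (A : Set B), ∀ x ∈ N, a * x ∈ N := fun a ha x hx =>
    ⟨hM.mul_left a ha x hx.1, mul_mem ha hx.2⟩
  have hauA : ∀ (R : ℝ) (h : B), h ∈ (A : Set B) → ∀ k, auSeq R h k ∈ (A : Set B) := by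
    intro R h hhA k
    induction k with
    | zero => simpa [auSeq_zero] using (zero_mem A : (0 : B) ∈ A)
    | succ k ih =>
      rw [auSeq_succ, hsmulR]
      exact add_mem ih (SMulMemClass.smul_mem _ (sub_mem hhA (mul_mem hhA ih)))
  -- one-sided module properties of E
  have hEr : ∀ m ∈ M, ∀ a ∈ (A : Set B), E.toFun (m * a) = E.toFun m * a := by
    intro m hm a ha
    set h : B := m * star m + E.toFun m * star (E.toFun m) with hh
    have hh0 : 0 ≤ h := add_nonneg (mul_star_self_nonneg m) (mul_star_self_nonneg _)
    have hhA : h ∈ (A : Set B) :=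
      add_mem (hM.mul_star_mem m hm m hm)
        (mul_mem (E.mem_range m) (star_mem (E.mem_range m)))
    have t1 : Tendsto (fun k => auSeq (‖h‖+1) h k * m) atTop (𝓝 m) :=
      auSeq_tendsto_left h m hh0 (le_add_of_nonneg_right (mul_star_self_nonneg _))
    have t2 : Tendsto (fun k => auSeq (‖h‖+1) h k * E.toFun m) atTop (𝓝 (E.toFun m)) :=
      auSeq_tendsto_left h _ hh0 (le_add_of_nonneg_left (mul_star_self_nonneg _))
    have t3 : Tendsto (fun k => E.toFun (auSeq (‖h‖+1) h k * m * a)) atTop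
        (𝓝 (E.toFun (m * a))) :=
      (hEc.tendsto _).comp (t1.mul (tendsto_const_nhds (x := a)))
    have t4 : Tendsto (fun k => E.toFun (auSeq (‖h‖+1) h k * m * a)) atTop
        (𝓝 (E.toFun m * a)) := by
      refine (t2.mul (tendsto_const_nhds (x := a))).congr fun k => ?_
      rw [E.bimodule _ (hauA (‖h‖+1) h hhA k) _ ha m]
    exact tendsto_nhds_unique t3 t4
  have hEl : ∀ a ∈ (A : Set B), ∀ m ∈ M, E.toFun (a * m) = a * E.toFun m := by
    intro a ha m hm
    set h : B := star m * m + star (E.toFun m) * E.toFun m with hh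
    have hh0 : 0 ≤ h := add_nonneg (star_mul_self_nonneg m) (star_mul_self_nonneg _)
    have hhA : h ∈ (A : Set B) :=
      add_mem (hM.star_mul_mem m hm m hm)
        (mul_mem (star_mem (E.mem_range m)) (E.mem_range m))
    have t1 : Tendsto (fun k => m * auSeq (‖h‖+1) h k) atTop (𝓝 m) :=
      auSeq_tendsto_right h m hh0 (le_add_of_nonneg_right (star_mul_self_nonneg _))
    have t2 : Tendsto (fun k => E.toFun m * auSeq (‖h‖+1) h k) atTop (𝓝 (E.toFun m)) :=
      auSeq_tendsto_right h _ hh0 (le_add_of_nonneg_left (star_mul_self_nonneg _))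
    have t3 : Tendsto (fun k => E.toFun (a * m * auSeq (‖h‖+1) h k)) atTop
        (𝓝 (E.toFun (a * m))) := by
      refine (hEc.tendsto _).comp ?_
      refine ((tendsto_const_nhds (x := a)).mul t1).congr fun k => ?_
      rw [mul_assoc]
    have t4 : Tendsto (fun k => E.toFun (a * m * auSeq (‖h‖+1) h k)) atTop
        (𝓝 (a * E.toFun m)) := by
      refine ((tendsto_const_nhds (x := a)).mul t2).congr fun k => ?_
      rw [← mul_assoc, E.bimodule _ ha _ (hauA (‖h‖+1) h hhA k) m]
    exact tendsto_nhds_unique t3 t4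
  -- N is star-closed
  have hNstar : ∀ n ∈ N, star n ∈ N := by
    intro n hn
    obtain ⟨hnM, hnA⟩ := hn
    set h : B := star n * n with hh
    have hh0 : 0 ≤ h := star_mul_self_nonneg n
    have hhN : h ∈ N := ⟨hM.mul_left _ (star_mem hnA) _ hnM, mul_mem (star_mem hnA) hnA⟩
    have hmem : ∀ k, auSeq (‖h‖+1) h k * star n ∈ N := by
      intro k
      induction k with
      | zero => simpa [auSeq_zero] using hNzero
      | succ k ih =>
        rw [auSeq_succ, add_mul, smul_mul_assoc, sub_mul]
        refine hNadd _ ih _ (hNsmulR _ _ (hNsub _ ?_ _ ?_))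
        · exact hNmulA _ hhN _ (star_mem hnA)
        · exact hNmulA _ (hNmulA _ hhN _ (hauA (‖h‖+1) h hhN.2 k)) _ (star_mem hnA)
    have t : Tendsto (fun k => auSeq (‖h‖+1) h k * star n) atTop (𝓝 (star n)) := by
      refine auSeq_tendsto_left h (star n) hh0 ?_
      rw [star_star, hh]
    exact hNclosed.mem_of_tendsto t (Eventually.of_forall hmem)
  -- SM is an A-bimodule
  have hSMr : ∀ x ∈ SM, ∀ a ∈ (A : Set B), x * a ∈ SM := by
    intro x hx a ha
    induction hx using Submodule.span_induction with
    | mem z hz =>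
      obtain ⟨m, hm, n, hn, rfl⟩ := hz
      exact Submodule.subset_span ⟨m, hm, n * a, hM.mul_right a ha n hn, mul_assoc _ _ _⟩
    | zero => rw [zero_mul]; exact zero_mem _
    | add x y hx hy ihx ihy => rw [add_mul]; exact add_mem ihx ihy
    | smul c x hx ih => rw [smul_mul_assoc]; exact Submodule.smul_mem _ _ ih
  -- N ⊆ J
  have hNsubJ : N ⊆ J := by
    rw [hJ]
    intro n hn
    obtain ⟨hnM, hnA⟩ := hn
    set h : B := star n * n with hh
    have hh0 : 0 ≤ h := star_mul_self_nonneg n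
    have hhA : h ∈ (A : Set B) := mul_mem (star_mem hnA) hnA
    have hgen : n * h ∈ SM := by
      refine Submodule.subset_span ⟨n * star n, hM.mul_right _ (star_mem hnA) _ hnM, n, hnM, ?_⟩
      rw [hh, star_mul, star_star, mul_assoc]
    have hmem : ∀ k, n * auSeq (‖h‖+1) h k ∈ SM := by
      intro k
      induction k with
      | zero => rw [auSeq_zero, mul_zero]; exact zero_mem _
      | succ k ih =>
        rw [auSeq_succ, mul_add, mul_smul_comm, mul_sub]
        have hassoc : n * (h * auSeq (‖h‖+1) h k) = n * h * auSeq (‖h‖+1) h k :=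
          (mul_assoc _ _ _).symm
        rw [hassoc]
        refine add_mem ih ?_
        rw [hsmulR]
        exact Submodule.smul_mem _ _ (sub_mem hgen (hSMr _ hgen _ (hauA (‖h‖+1) h hhA k)))
    have t : Tendsto (fun k => n * auSeq (‖h‖+1) h k) atTop (𝓝 n) :=
      auSeq_tendsto_right h n hh0 (le_of_eq hh.symm)
    exact mem_closure_of_tendsto t (Eventually.of_forall hmem)
  -- M₀ and orthogonality
  set M₀ : Set B := {m : B | m ∈ M ∧ E.toFun m = 0} with hM₀def
  have hNM₀ : ∀ n ∈ N, ∀ p ∈ M₀, n * p = 0 := by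
    intro n hn p hp
    have hsn : star n ∈ N := hNstar n hn
    have h1 : n * p ∈ (A : Set B) := by
      have := hM.star_mul_mem (star n) hsn.1 p hp.1
      rwa [star_star] at this
    have h2 : E.toFun (n * p) = 0 := by rw [hEl n hn.2 p hp.1, hp.2, mul_zero]
    rw [← E.fixes _ h1, h2]
  have hM₀N : ∀ p ∈ M₀, ∀ n ∈ N, p * n = 0 := by
    intro p hp n hn
    have hsn : star n ∈ N := hNstar n hn
    have h1 : p * n ∈ (A : Set B) := by
      have := hM.mul_star_mem p hp.1 (star n) hsn.1
      rwa [star_star] at this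
    have h2 : E.toFun (p * n) = 0 := by rw [hEr p hp.1 n hn.2, hp.2, zero_mul]
    rw [← E.fixes _ h1, h2]
  have hEmN : ∀ m ∈ M, E.toFun m ∈ N := fun m hm => ⟨hEM m hm, E.mem_range m⟩
  have hdefect : ∀ m ∈ M, m - E.toFun m ∈ M₀ := fun m hm =>
    ⟨M.sub_mem hm (hEM m hm), by rw [map_sub, E.fixes _ (E.mem_range m), sub_self]⟩
  have hgen_split : ∀ m ∈ M, ∀ m' ∈ M, star m * m' =
      star (E.toFun m) * E.toFun m' + star (m - E.toFun m) * (m' - E.toFun m') := by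
    intro m hm m' hm'
    have c1 : star (E.toFun m) * (m' - E.toFun m') = 0 :=
      hNM₀ _ (hNstar _ (hEmN m hm)) _ (hdefect m' hm')
    have c2 : star (m - E.toFun m) * E.toFun m' = 0 := by
      have h0 : star (E.toFun m') * (m - E.toFun m) = 0 :=
        hNM₀ _ (hNstar _ (hEmN m' hm')) _ (hdefect m hm)
      calc star (m - E.toFun m) * E.toFun m'
          = star (star (E.toFun m') * (m - E.toFun m)) := by rw [star_mul, star_star]
      _ = 0 := by rw [h0, star_zero]
    have expand : star m * m' =
        star (E.toFun m) * E.toFun m' + star (E.toFun m) * (m' - E.toFun m')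
        + (star (m - E.toFun m) * E.toFun m' + star (m - E.toFun m) * (m' - E.toFun m')) := by
      have hm2 : m = E.toFun m + (m - E.toFun m) := by abel
      have hm'2 : m' = E.toFun m' + (m' - E.toFun m') := by abel
      conv_lhs => rw [hm2, hm'2]
      rw [star_add, add_mul, mul_add, mul_add]
    rw [expand, c1, c2]
    abel
  -- the complement KS and its closure
  set KS : Submodule ℂ B := Submodule.span ℂ
      {z : B | ∃ p ∈ M₀, ∃ q ∈ M₀, z = star p * q} with hKSdef
  set K : Set B := (KS.topologicalClosure : Set B) with hKdef
  have hKcl : K = closure (KS : Set B) := Submodule.topologicalClosure_coe KS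
  have hKSstar : ∀ k ∈ KS, star k ∈ KS := by
    intro k hk
    induction hk using Submodule.span_induction with
    | mem z hz =>
      obtain ⟨p, hp, q, hq, rfl⟩ := hz
      exact Submodule.subset_span ⟨q, hq, p, hp, by rw [star_mul, star_star]⟩
    | zero => rw [star_zero]; exact zero_mem _
    | add x y hx hy ihx ihy => rw [star_add]; exact add_mem ihx ihy
    | smul c x hx ih => rw [star_smul]; exact Submodule.smul_mem _ _ ih
  have hNKS : ∀ n ∈ N, ∀ k ∈ KS, n * k = 0 := by
    intro n hn k hk
    induction hk using Submodule.span_induction with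
    | mem z hz =>
      obtain ⟨p, hp, q, hq, rfl⟩ := hz
      have h1 : n * star p = 0 := by
        have h0 : p * star n = 0 := hM₀N p hp _ (hNstar n hn)
        calc n * star p = star (p * star n) := by rw [star_mul, star_star]
        _ = 0 := by rw [h0, star_zero]
      rw [← mul_assoc, h1, zero_mul]
    | zero => rw [mul_zero]
    | add x y hx hy ihx ihy => rw [mul_add, ihx, ihy, add_zero]
    | smul c x hx ih => rw [mul_smul_comm, ih, smul_zero]
  have hKSN : ∀ k ∈ KS, ∀ n ∈ N, k * n = 0 := by
    intro k hk n hn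
    induction hk using Submodule.span_induction with
    | mem z hz =>
      obtain ⟨p, hp, q, hq, rfl⟩ := hz
      rw [mul_assoc, hM₀N q hq n hn, mul_zero]
    | zero => rw [zero_mul]
    | add x y hx hy ihx ihy => rw [add_mul, ihx, ihy, add_zero]
    | smul c x hx ih => rw [smul_mul_assoc, ih, smul_zero]
  have hKSKS : ∀ x ∈ KS, ∀ y ∈ KS, x * y ∈ KS := by
    have hgenKS : ∀ p ∈ M₀, ∀ q ∈ M₀, ∀ y ∈ KS, (star p * q) * y ∈ KS := by
      intro p hp q hq y hy
      induction hy using Submodule.span_induction with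
      | mem z hz =>
        obtain ⟨p', hp', q', hq', rfl⟩ := hz
        have haq : q * star p' ∈ (A : Set B) := hM.mul_star_mem q hq.1 p' hp'.1
        have hqq : (q * star p') * q' ∈ M₀ := by
          refine ⟨hM.mul_left _ haq _ hq'.1, ?_⟩
          rw [hEl _ haq _ hq'.1, hq'.2, mul_zero]
        refine Submodule.subset_span ⟨p, hp, (q * star p') * q', hqq, ?_⟩
        simp only [mul_assoc]
      | zero => rw [mul_zero]; exact zero_mem _
      | add x y hx hy ihx ihy => rw [mul_add]; exact add_mem ihx ihy
      | smul c x hx ih => rw [mul_smul_comm]; exact Submodule.smul_mem _ _ ih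
    intro x hx y hy
    induction hx using Submodule.span_induction with
    | mem z hz =>
      obtain ⟨p, hp, q, hq, rfl⟩ := hz
      exact hgenKS p hp q hq y hy
    | zero => rw [zero_mul]; exact zero_mem _
    | add x x' hx hx' ihx ihx' => rw [add_mul]; exact add_mem ihx ihx'
    | smul c x hx ih => rw [smul_mul_assoc]; exact Submodule.smul_mem _ _ ih
  -- decomposition of SM
  have hSMsplit : ∀ x ∈ SM, ∃ n ∈ N, ∃ k ∈ KS, x = n + k := by
    intro x hx
    induction hx using Submodule.span_induction with
    | mem z hz =>
      obtain ⟨m, hm, m', hm', rfl⟩ := hz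
      refine ⟨star (E.toFun m) * E.toFun m',
        hNmulA _ (hNstar _ (hEmN m hm)) _ (hEmN m' hm').2, ?_⟩
      refine ⟨star (m - E.toFun m) * (m' - E.toFun m'),
        Submodule.subset_span ⟨m - E.toFun m, hdefect m hm, m' - E.toFun m', hdefect m' hm', rfl⟩, ?_⟩
      exact hgen_split m hm m' hm'
    | zero => exact ⟨0, hNzero, 0, zero_mem _, by rw [add_zero]⟩
    | add x y hx hy ihx ihy =>
      obtain ⟨n1, hn1, k1, hk1, rfl⟩ := ihx
      obtain ⟨n2, hn2, k2, hk2, rfl⟩ := ihy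
      exact ⟨n1 + n2, hNadd _ hn1 _ hn2, k1 + k2, add_mem hk1 hk2, by abel⟩
    | smul c x hx ih =>
      obtain ⟨n1, hn1, k1, hk1, rfl⟩ := ih
      exact ⟨c • n1, hNsmul c _ hn1, c • k1, Submodule.smul_mem _ _ hk1, by rw [smul_add]⟩
  -- extend orthogonality to the closure K
  have hNK : ∀ n ∈ N, ∀ k ∈ K, n * k = 0 := by
    intro n hn k hk
    rw [hKcl] at hk
    have hcl : IsClosed {x : B | n * x = 0} :=
      isClosed_eq (continuous_const.mul continuous_id) continuous_const
    exact closure_minimal (fun x hx => hNKS n hn x hx) hcl hk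
  -- norm comparison for orthogonal decompositions
  have horth_norm : ∀ x ∈ N, ∀ y ∈ KS, ‖x‖ ≤ ‖x + y‖ := by
    intro x hx y hy
    have h1 : star x * y = 0 := hNKS _ (hNstar x hx) _ hy
    have h2 : star y * x = 0 := hKSN _ (hKSstar y hy) _ hx
    have key : star (x + y) * (x + y) = star x * x + star y * y := by
      rw [star_add, add_mul, mul_add, mul_add, h1, h2]
      abel
    have hle : star x * x ≤ star (x + y) * (x + y) := by
      rw [key]; exact le_add_of_nonneg_right (star_mul_self_nonneg y)
    have h3 := CStarAlgebra.norm_le_norm_of_nonneg_of_le (star_mul_self_nonneg x) hle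
    rw [CStarRing.norm_star_mul_self, CStarRing.norm_star_mul_self] at h3
    nlinarith [norm_nonneg x, norm_nonneg (x + y)]
  -- J is inside A
  have hJA : J ⊆ (A : Set B) := by
    rw [hJ]
    have h1 : (SM : Set B) ⊆ (A : Set B) := by
      intro x hx
      induction hx using Submodule.span_induction with
      | mem z hz =>
        obtain ⟨m, hm, n, hn, rfl⟩ := hz
        exact hM.star_mul_mem m hm n hn
      | zero => exact zero_mem A
      | add x y hx hy ihx ihy => exact add_mem ihx ihy
      | smul c x hx ih => exact SMulMemClass.smul_mem c ih
    calc closure (SM : Set B) ⊆ closure (A : Set B) := closure_mono h1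
    _ = (A : Set B) := hAclosed.closure_eq
  have hKsubJ : K ⊆ J := by
    rw [hJ, hKcl]
    refine closure_mono ?_
    have : KS ≤ SM := Submodule.span_mono ?_
    · exact fun x hx => this hx
    · rintro z ⟨p, hp, q, hq, rfl⟩
      exact ⟨p, hp.1, q, hq.1, rfl⟩
  -- K is an ideal in J
  have hJK : ∀ j ∈ J, ∀ k ∈ K, j * k ∈ K := by
    intro j hj k hk
    rw [hJ] at hj
    rw [hKcl] at hk ⊢
    obtain ⟨s, hs, hslim⟩ := mem_closure_iff_seq_limit.mp hj
    obtain ⟨t, ht, htlim⟩ := mem_closure_iff_seq_limit.mp hk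
    have hmem : ∀ i, s i * t i ∈ (KS : Set B) := by
      intro i
      obtain ⟨n, hn, k', hk', heq⟩ := hSMsplit (s i) (hs i)
      rw [heq, add_mul, hNKS n hn _ (ht i), zero_add]
      exact hKSKS k' hk' _ (ht i)
    exact mem_closure_of_tendsto (hslim.mul htlim) (Eventually.of_forall hmem)
  have hKJ : ∀ j ∈ J, ∀ k ∈ K, k * j ∈ K := by
    intro j hj k hk
    rw [hJ] at hj
    rw [hKcl] at hk ⊢
    obtain ⟨s, hs, hslim⟩ := mem_closure_iff_seq_limit.mp hj
    obtain ⟨t, ht, htlim⟩ := mem_closure_iff_seq_limit.mp hk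
    have hmem : ∀ i, t i * s i ∈ (KS : Set B) := by
      intro i
      obtain ⟨n, hn, k', hk', heq⟩ := hSMsplit (s i) (hs i)
      rw [heq, mul_add, hKSN _ (ht i) n hn, zero_add]
      exact hKSKS _ (ht i) k' hk'
    exact mem_closure_of_tendsto (htlim.mul hslim) (Eventually.of_forall hmem)
  -- Finish
  refine ⟨?_, ⟨⟨N, hNsubJ, hNzero, hNadd, hNsmul, ?_, ?_, hNclosed⟩, rfl⟩,
    ⟨⟨K, hKsubJ, ?_, ?_, ?_, hJK, fun a ha x hx => hKJ a ha x hx, ?_⟩, ?_, ?_⟩⟩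
  · -- E '' M = M ∩ A
    apply Set.Subset.antisymm
    · rintro _ ⟨m, hm, rfl⟩
      exact hEmN m hm
    · rintro x hx
      exact ⟨x, hx.1, E.fixes x hx.2⟩
  · exact fun a ha x hx => hAmulN a (hJA ha) x hx
  · exact fun a ha x hx => hNmulA x hx a (hJA ha)
  · exact zero_mem KS.topologicalClosure
  · exact fun x hx y hy => add_mem hx hy
  · exact fun c x hx => Submodule.smul_mem _ c hx
  · rw [hKcl]; exact isClosed_closure
  · -- N ∩ K = {0}
    apply Set.Subset.antisymm
    · rintro x ⟨hxN, hxK⟩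
      have h1 : star x * x = 0 := hNK _ (hNstar x hxN) _ hxK
      have h2 : ‖x‖ * ‖x‖ = 0 := by rw [← CStarRing.norm_star_mul_self, h1, norm_zero]
      have h3 : ‖x‖ = 0 := by nlinarith [norm_nonneg x]
      simpa using norm_eq_zero.mp h3
    · rintro x hx
      rw [Set.mem_singleton_iff] at hx
      subst hx
      exact ⟨hNzero, zero_mem KS.topologicalClosure⟩
  · -- N + K = J
    apply Set.Subset.antisymm
    · rintro z ⟨x, hx, y, hy, rfl⟩
      have hxJ := hNsubJ hx
      have hyJ := hKsubJ hy
      rw [hJ] at hxJ hyJ ⊢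
      rw [← Submodule.topologicalClosure_coe SM] at hxJ hyJ ⊢
      exact add_mem hxJ hyJ
    · intro j hj
      rw [hJ] at hj
      obtain ⟨s, hs, hslim⟩ := mem_closure_iff_seq_limit.mp hj
      choose n hn k hk hsnk using fun i => hSMsplit (s i) (hs i)
      have hcauchy : CauchySeq n := by
        have hsc : CauchySeq s := hslim.cauchySeq
        rw [Metric.cauchySeq_iff] at hsc ⊢
        intro ε hε
        obtain ⟨N₁, hN₁⟩ := hsc ε hε
        refine ⟨N₁, fun i hi l hl => ?_⟩
        have hxy : ‖n i - n l‖ ≤ ‖(n i - n l) + (k i - k l)‖ :=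
          horth_norm _ (hNsub _ (hn i) _ (hn l)) _ (sub_mem (hk i) (hk l))
        have heq : (n i - n l) + (k i - k l) = s i - s l := by
          rw [hsnk i, hsnk l]; abel
        rw [heq] at hxy
        rw [dist_eq_norm]
        refine lt_of_le_of_lt hxy ?_
        rw [← dist_eq_norm]
        exact hN₁ i hi l hl
      obtain ⟨x, hxlim⟩ := cauchySeq_tendsto_of_complete hcauchy
      have hxN : x ∈ N := hNclosed.mem_of_tendsto hxlim (Eventually.of_forall hn)
      have hklim : Tendsto k atTop (𝓝 (j - x)) := by
        refine (hslim.sub hxlim).congr fun i => ?_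
        rw [hsnk i]; abel
      have hkK : (j - x) ∈ K := by
        rw [hKcl]
        exact mem_closure_of_tendsto hklim (Eventually.of_forall fun i => hk i)
      exact ⟨x, hxN, j - x, hkK, by abel⟩
end
end

section
/- Let A ⊆ B be a non-degenerate C*-inclusion and P : B → A a conditional expectation. If every virtual commutant of A in B has range contained in A, then P preserves slices: P(M) ⊆ M for every slice M ⊆ B. -/
open scoped MultiplierAlgebra

noncomputable section

open NCCartan

/-!
For `m` in a slice `M`, both `m* m` and `m m*` lie in `A`, so the elements
`u_c = (m* m)(m* m + c)⁻¹` of `A` and their left-hand analogues act as approximate units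
for `m` as `c → 0`. Hence `m` lies in the closure of `A B A`, and `P` is `A`-linear on `m`
from either side.

This makes `x ↦ P(x ·)` a virtual commutant on the closed ideal `I` of `A` spanned by `M M*`:
`φ(x)` is the unique `t` with `t* ∈ M` and `t y = P(x y)` for all `y ∈ M`. Uniqueness and
the closedness of its domain both come from `‖t‖ ≤ ‖x‖`, and `φ(p n*) = P(p) n*`. By
hypothesis `P(m) m* ∈ A`, so `P(m) m* m ∈ M`. The identity `c u_c = m* m - m* m u_c` then
puts every `P(m u_c) = P(m) u_c` in `M`, and letting `c → 0` gives `P(m) ∈ M`.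
-/

open Filter Topology
open scoped Pointwise

namespace NCCartan

variable {B : Type*} [NonUnitalCStarAlgebra B]

/-- `b (b + c)⁻¹`, which makes sense without a unit. -/
def approxUnit (c : ℝ) (b : B) : B := cfcₙ (fun t : ℝ => t / (t + c)) b

section approxUnit

variable {c : ℝ} {b : B}

lemma isSelfAdjoint_approxUnit : IsSelfAdjoint (approxUnit c b) := IsSelfAdjoint.cfcₙ

lemma approxUnit_mem (A : NonUnitalStarSubalgebra ℂ B) [IsClosed (A : Set B)] (hb : b ∈ A) :
    approxUnit c b ∈ A :=
  cfcₙ_mem (𝕜' := ℂ) _ hb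

variable [PartialOrder B] [StarOrderedRing B]

lemma add_pos_of_mem_quasispectrum (hb : 0 ≤ b) (hc : 0 < c) {t : ℝ}
    (ht : t ∈ quasispectrum ℝ b) : 0 < t + c :=
  add_pos_of_nonneg_of_pos (quasispectrum_nonneg_of_nonneg b hb t ht) hc

lemma continuousOn_div_add (hb : 0 ≤ b) (hc : 0 < c) :
    ContinuousOn (fun t : ℝ => t / (t + c)) (quasispectrum ℝ b) :=
  continuousOn_id.div (by fun_prop) fun _ ht => (add_pos_of_mem_quasispectrum hb hc ht).ne'

lemma norm_approxUnit_le_one (hb : 0 ≤ b) (hc : 0 < c) : ‖approxUnit c b‖ ≤ 1 :=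
  norm_cfcₙ_le fun t ht => by
    have ht0 := quasispectrum_nonneg_of_nonneg b hb t ht
    rw [Real.norm_eq_abs, abs_div, abs_of_nonneg ht0,
      abs_of_pos (add_pos_of_mem_quasispectrum hb hc ht)]
    exact div_le_one_of_le₀ (by linarith) (by linarith)

lemma sub_mul_approxUnit (hb : 0 ≤ b) (hc : 0 < c) :
    b - b * approxUnit c b = c • approxUnit c b := by
  have hf := continuousOn_div_add hb hc
  calc b - b * approxUnit c b
      = cfcₙ (fun t : ℝ => t - t * (t / (t + c))) b := by
        rw [cfcₙ_sub (fun t : ℝ => t) (fun t => t * (t / (t + c))) b continuousOn_id rfl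
            (continuousOn_id.mul hf) (by simp),
          cfcₙ_mul (fun t : ℝ => t) _ b continuousOn_id rfl hf (by simp), cfcₙ_id' ℝ b,
          approxUnit]
    _ = cfcₙ (fun t : ℝ => c • (t / (t + c))) b := cfcₙ_congr fun t ht => by
        have : t + c ≠ 0 := (add_pos_of_mem_quasispectrum hb hc ht).ne'
        simp only [smul_eq_mul]
        field_simp
        ring
    _ = c • approxUnit c b := cfcₙ_smul c _ b hf

lemma norm_sub_mul_approxUnit_sq_le (x : B) (hc : 0 < c) :
    ‖x - x * approxUnit c (star x * x)‖ ^ 2 ≤ 2 * c := by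
  have hb : 0 ≤ star x * x := star_mul_self_nonneg x
  have hu : ‖approxUnit c (star x * x)‖ ≤ 1 := norm_approxUnit_le_one hb hc
  have hres := sub_mul_approxUnit hb hc
  have hsa : star (approxUnit c (star x * x)) = _ := isSelfAdjoint_approxUnit.star_eq
  generalize approxUnit c (star x * x) = u at hu hres hsa
  have key : star (x - x * u) * (x - x * u) = c • (u - u * u) := by
    have : star (x - x * u) * (x - x * u) =
        (star x * x - star x * x * u) - u * (star x * x - star x * x * u) := by
      rw [star_sub, star_mul, hsa]
      noncomm_ring
    rw [this, hres, mul_smul_comm, smul_sub]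
  rw [sq, ← CStarRing.norm_star_mul_self, key, norm_smul, Real.norm_of_nonneg hc.le]
  calc c * ‖u - u * u‖ ≤ c * (‖u‖ + ‖u‖ * ‖u‖) := by
        gcongr; exact (norm_sub_le _ _).trans (by gcongr; exact norm_mul_le _ _)
    _ ≤ c * (1 + 1 * 1) := by gcongr
    _ = 2 * c := by ring

lemma tendsto_mul_approxUnit (x : B) :
    Tendsto (fun c => x * approxUnit c (star x * x)) (𝓝[>] 0) (𝓝 x) := by
  rw [tendsto_iff_norm_sub_tendsto_zero]
  have hsqrt : Tendsto (fun c : ℝ => √(2 * c)) (𝓝[>] 0) (𝓝 0) := by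
    have hcont : Continuous fun c : ℝ => √(2 * c) := by fun_prop
    simpa using (hcont.tendsto 0).mono_left nhdsWithin_le_nhds
  refine squeeze_zero' (.of_forall fun _ => norm_nonneg _) ?_ hsqrt
  filter_upwards [self_mem_nhdsWithin] with c (hc : 0 < c)
  rw [norm_sub_rev]
  exact Real.le_sqrt_of_sq_le (norm_sub_mul_approxUnit_sq_le x hc)

lemma tendsto_approxUnit_mul (x : B) :
    Tendsto (fun c => approxUnit c (x * star x) * x) (𝓝[>] 0) (𝓝 x) := by
  have := (continuous_star.tendsto _).comp (tendsto_mul_approxUnit (star x))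
  simpa [Function.comp_def, isSelfAdjoint_approxUnit.star_eq] using this

lemma mem_closure_mul_univ_mul (A : NonUnitalStarSubalgebra ℂ B) [IsClosed (A : Set B)] {x : B}
    (h₁ : star x * x ∈ A) (h₂ : x * star x ∈ A) :
    x ∈ closure ((A : Set B) * Set.univ * (A : Set B)) := by
  have hright : ∀ u ∈ A, x * u ∈ closure ((A : Set B) * Set.univ * (A : Set B)) := fun u hu =>
    mem_closure_of_tendsto ((tendsto_approxUnit_mul x).mul_const u) <|
      .of_forall fun c =>
        Set.mul_mem_mul (Set.mul_mem_mul (approxUnit_mem A h₂) (Set.mem_univ x)) hu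
  exact isClosed_closure.mem_of_tendsto (tendsto_mul_approxUnit x) <|
    .of_forall fun c => hright _ (approxUnit_mem A h₁)

end approxUnit

def CIdealIn.ofClosureSpan (A : NonUnitalStarSubalgebra ℂ B) [hA : IsClosed (A : Set B)]
    (S : Set B) (hSA : S ⊆ A) (hl : ∀ a ∈ A, ∀ s ∈ S, a * s ∈ S)
    (hr : ∀ a ∈ A, ∀ s ∈ S, s * a ∈ S) : CIdealIn (A : Set B) where
  carrier := (Submodule.span ℂ S).topologicalClosure
  subset := by
    rw [Submodule.topologicalClosure_coe]
    exact closure_minimal (Submodule.span_le (p := A.toNonUnitalSubalgebra.toSubmodule).2 hSA) hA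
  zero_mem := Submodule.zero_mem _
  add_mem _ hx _ hy := Submodule.add_mem _ hx hy
  smul_mem c _ hx := Submodule.smul_mem _ c hx
  mul_left a ha x hx := by
    have : Submodule.span ℂ S ≤ (Submodule.span ℂ S).comap (LinearMap.mulLeft ℂ a) :=
      Submodule.span_le.2 fun s hs => Submodule.subset_span (hl a ha s hs)
    rw [Submodule.topologicalClosure_coe] at hx ⊢
    exact map_mem_closure (continuous_const_mul a) hx fun z hz => this hz
  mul_right a ha x hx := by
    have : Submodule.span ℂ S ≤ (Submodule.span ℂ S).comap (LinearMap.mulRight ℂ a) :=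
      Submodule.span_le.2 fun s hs => Submodule.subset_span (hr a ha s hs)
    rw [Submodule.topologicalClosure_coe] at hx ⊢
    exact map_mem_closure (f := (· * a)) (continuous_mul_const a) hx fun z hz => this hz
  isClosed := (Submodule.span ℂ S).isClosed_topologicalClosure

variable [PartialOrder B]

namespace CondExp

variable {A : NonUnitalStarSubalgebra ℂ B} (P : CondExp (A : Set B)) (M : Submodule ℂ B)

lemma continuous : Continuous P.toFun :=
  AddMonoidHomClass.continuous_of_bound P.toFun 1 fun x => by simpa using P.contractive x

lemma map_mul_right_of_mem_closure {y a : B}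
    (hy : y ∈ closure ((A : Set B) * Set.univ * (A : Set B))) (ha : a ∈ A) :
    P.toFun (y * a) = P.toFun y * a := by
  refine closure_minimal (t := {y | P.toFun (y * a) = P.toFun y * a}) ?_
    (isClosed_eq (P.continuous.comp (continuous_mul_const a)) (P.continuous.mul_const a)) hy
  rintro _ ⟨_, ⟨w, hw, z, -, rfl⟩, u, hu, rfl⟩
  rw [Set.mem_ofPred_eq, mul_assoc _ u a, P.bimodule w hw _ (mul_mem hu ha),
    P.bimodule w hw u hu, mul_assoc _ u a]

lemma map_mul_left_of_mem_closure {y a : B}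
    (hy : y ∈ closure ((A : Set B) * Set.univ * (A : Set B))) (ha : a ∈ A) :
    P.toFun (a * y) = a * P.toFun y := by
  refine closure_minimal (t := {y | P.toFun (a * y) = a * P.toFun y}) ?_
    (isClosed_eq (P.continuous.comp (continuous_const_mul a)) (P.continuous.const_mul a)) hy
  rintro _ ⟨_, ⟨w, hw, z, -, rfl⟩, u, hu, rfl⟩
  rw [Set.mem_ofPred_eq, ← mul_assoc a (w * z), ← mul_assoc a w,
    P.bimodule _ (mul_mem ha hw) u hu, P.bimodule w hw u hu, ← mul_assoc a (w * _),
    ← mul_assoc a w]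

def commutantGraph : Submodule ℂ (B × B) where
  carrier := {p | star p.2 ∈ M ∧ ∀ y ∈ M, p.2 * y = P.toFun (p.1 * y)}
  zero_mem' := by simp
  add_mem' {p q} hp hq := by
    refine ⟨by simpa using M.add_mem hp.1 hq.1, fun y hy => ?_⟩
    simp [add_mul, hp.2 y hy, hq.2 y hy]
  smul_mem' c p hp := by
    refine ⟨by simpa using M.smul_mem (star c) hp.1, fun y hy => ?_⟩
    rw [Prod.smul_fst, Prod.smul_snd, smul_mul_assoc, smul_mul_assoc, hp.2 y hy, map_smul]

open Classical in
def commutant (x : B) : B :=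
  if h : ∃ t, (x, t) ∈ P.commutantGraph M then h.choose else 0

variable {P M}

lemma norm_snd_le_of_mem_commutantGraph {p : B × B} (hp : p ∈ P.commutantGraph M) :
    ‖p.2‖ ≤ ‖p.1‖ := by
  have key : ‖p.2‖ * ‖p.2‖ ≤ ‖p.1‖ * ‖p.2‖ :=
    calc ‖p.2‖ * ‖p.2‖ = ‖P.toFun (p.1 * star p.2)‖ := by
          rw [← hp.2 _ hp.1, CStarRing.norm_self_mul_star]
      _ ≤ ‖p.1 * star p.2‖ := P.contractive _
      _ ≤ ‖p.1‖ * ‖p.2‖ := by simpa using norm_mul_le p.1 (star p.2)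
  nlinarith [norm_nonneg p.1, norm_nonneg p.2]

lemma eq_of_mem_commutantGraph {x t t' : B} (h : (x, t) ∈ P.commutantGraph M)
    (h' : (x, t') ∈ P.commutantGraph M) : t = t' := by
  have := norm_snd_le_of_mem_commutantGraph (Submodule.sub_mem _ h h')
  rw [Prod.mk_sub_mk, sub_self, norm_zero] at this
  exact sub_eq_zero.1 (norm_le_zero_iff.1 this)

lemma isClosed_commutantGraph (hM : IsClosed (M : Set B)) :
    IsClosed (P.commutantGraph M : Set (B × B)) := by
  have hG : (P.commutantGraph M : Set (B × B)) = (fun p => star p.2) ⁻¹' M ∩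
      ⋂ y ∈ M, {p | p.2 * y = P.toFun (p.1 * y)} := by
    ext p; simp [commutantGraph]
  rw [hG]
  refine (hM.preimage (continuous_star.comp continuous_snd)).inter
    (isClosed_biInter fun y _ => isClosed_eq ?_ ?_)
  · fun_prop
  · exact P.continuous.comp (continuous_fst.mul_const y)

lemma isClosed_map_fst_commutantGraph (hM : IsClosed (M : Set B)) :
    IsClosed ((P.commutantGraph M).map (LinearMap.fst ℂ B B) : Set B) := by
  have : CompleteSpace (P.commutantGraph M) :=
    (isClosed_commutantGraph hM).completeSpace_coe
  let f := (LinearMap.fst ℂ B B).comp (P.commutantGraph M).subtype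
  have hf : Isometry f := AddMonoidHomClass.isometry_of_norm f fun p => by
    simp [f, Prod.norm_def, norm_snd_le_of_mem_commutantGraph p.2]
  have hrange : Set.range f = (P.commutantGraph M).map (LinearMap.fst ℂ B B) := by
    simp [f, Set.range_comp]
  exact hrange ▸ hf.isClosedEmbedding.isClosed_range

lemma commutant_eq {x t : B} (h : (x, t) ∈ P.commutantGraph M) : P.commutant M x = t := by
  have h' : ∃ t, (x, t) ∈ P.commutantGraph M := ⟨t, h⟩
  rw [commutant, dif_pos h']
  exact eq_of_mem_commutantGraph h'.choose_spec h

lemma mul_right_mem_commutantGraph (hM : IsSlice (A : Set B) M) {a x t : B} (ha : a ∈ A)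
    (h : (x, t) ∈ P.commutantGraph M) : (x * a, t * a) ∈ P.commutantGraph M := by
  refine ⟨?_, fun y hy => ?_⟩
  · simpa using hM.mul_left _ (star_mem ha) _ h.1
  · simp only [mul_assoc, h.2 _ (hM.mul_left a ha y hy)]

end CondExp

variable [StarOrderedRing B] {A : NonUnitalStarSubalgebra ℂ B} [IsClosed (A : Set B)]
  {P : CondExp (A : Set B)} {M : Submodule ℂ B}

namespace CondExp

lemma map_mul_right_of_isSlice (hM : IsSlice (A : Set B) M) {m a : B} (hm : m ∈ M)
    (ha : a ∈ A) :
    P.toFun (m * a) = P.toFun m * a :=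
  P.map_mul_right_of_mem_closure
    (mem_closure_mul_univ_mul A (hM.star_mul_mem m hm m hm) (hM.mul_star_mem m hm m hm)) ha

lemma map_mul_left_of_isSlice (hM : IsSlice (A : Set B) M) {m a : B} (hm : m ∈ M)
    (ha : a ∈ A) :
    P.toFun (a * m) = a * P.toFun m :=
  P.map_mul_left_of_mem_closure
    (mem_closure_mul_univ_mul A (hM.star_mul_mem m hm m hm) (hM.mul_star_mem m hm m hm)) ha

lemma mul_star_mem_commutantGraph (hM : IsSlice (A : Set B) M) {p n : B} (hp : p ∈ M)
    (hn : n ∈ M) : (p * star n, P.toFun p * star n) ∈ P.commutantGraph M := by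
  refine ⟨?_, fun y hy => ?_⟩
  · simpa using hM.mul_right _ (star_mem (P.mem_range p)) n hn
  · simp only [mul_assoc, map_mul_right_of_isSlice hM hp (hM.star_mul_mem n hn y hy)]

lemma mul_left_mem_commutantGraph (hM : IsSlice (A : Set B) M) {a x t : B} (ha : a ∈ A)
    (hx : x ∈ A) (h : (x, t) ∈ P.commutantGraph M) : (a * x, a * t) ∈ P.commutantGraph M := by
  refine ⟨?_, fun y hy => ?_⟩
  · simpa using hM.mul_right _ (star_mem ha) _ h.1
  · simp only [mul_assoc, h.2 y hy, map_mul_left_of_isSlice hM (hM.mul_left x hx y hy) ha]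

end CondExp

def IsSlice.ideal (hM : IsSlice (A : Set B) M) : CIdealIn (A : Set B) :=
  CIdealIn.ofClosureSpan A {z | ∃ p ∈ M, ∃ n ∈ M, p * star n = z}
    (by rintro _ ⟨p, hp, n, hn, rfl⟩; exact hM.mul_star_mem p hp n hn)
    (by
      rintro a ha _ ⟨p, hp, n, hn, rfl⟩
      exact ⟨a * p, hM.mul_left a ha p hp, n, hn, mul_assoc ..⟩)
    (by
      rintro a ha _ ⟨p, hp, n, hn, rfl⟩
      exact ⟨p, hp, star a * n, hM.mul_left _ (star_mem ha) n hn, by simp [mul_assoc]⟩)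

lemma IsSlice.ideal_subset_map_fst_commutantGraph (hM : IsSlice (A : Set B) M) :
    hM.ideal.carrier ⊆ (P.commutantGraph M).map (LinearMap.fst ℂ B B) := by
  refine Submodule.topologicalClosure_minimal _ ?_ (P.isClosed_map_fst_commutantGraph hM.isClosed)
  refine Submodule.span_le.2 ?_
  rintro _ ⟨p, hp, n, hn, rfl⟩
  exact ⟨_, P.mul_star_mem_commutantGraph hM hp hn, rfl⟩

namespace CondExp

lemma mk_commutant_mem_commutantGraph (hM : IsSlice (A : Set B) M) {x : B}
    (hx : x ∈ hM.ideal.carrier) : (x, P.commutant M x) ∈ P.commutantGraph M := by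
  obtain ⟨⟨x, t⟩, h, rfl⟩ := hM.ideal_subset_map_fst_commutantGraph (P := P) hx
  rwa [LinearMap.fst_apply, commutant_eq h]

variable (P) in
def virtualCommutant (hM : IsSlice (A : Set B) M) :
    VirtualCommutant (A : Set B) hM.ideal.carrier where
  toFun := P.commutant M
  map_add _ hx _ hy := commutant_eq <| Submodule.add_mem _
    (mk_commutant_mem_commutantGraph hM hx) (mk_commutant_mem_commutantGraph hM hy)
  map_smul c _ hx := commutant_eq <| Submodule.smul_mem _ c (mk_commutant_mem_commutantGraph hM hx)
  left_mod _ ha _ hx := commutant_eq <|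
    mul_left_mem_commutantGraph hM ha (hM.ideal.subset hx) (mk_commutant_mem_commutantGraph hM hx)
  right_mod _ ha _ hx := commutant_eq <|
    mul_right_mem_commutantGraph hM ha (mk_commutant_mem_commutantGraph hM hx)

variable (P) in
lemma mul_star_mem_of_virtualCommutantsTrivial (hvc : VirtualCommutantsTrivial (A : Set B))
    (hM : IsSlice (A : Set B) M) {p n : B} (hp : p ∈ M) (hn : n ∈ M) :
    P.toFun p * star n ∈ A := by
  have hx : p * star n ∈ hM.ideal.carrier :=
    Submodule.le_topologicalClosure _ (Submodule.subset_span ⟨p, hp, n, hn, rfl⟩)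
  have := hvc hM.ideal (P.virtualCommutant hM) _ hx
  change P.commutant M (p * star n) ∈ A at this
  rwa [commutant_eq (mul_star_mem_commutantGraph hM hp hn)] at this

variable (P) in
lemma map_mem_of_mul_star_mem (hM : IsSlice (A : Set B) M) {m : B} (hm : m ∈ M)
    (h : P.toFun m * star m ∈ A) : P.toFun m ∈ M := by
  refine hM.isClosed.mem_of_tendsto
    ((P.continuous.tendsto m).comp (tendsto_mul_approxUnit m)) ?_
  filter_upwards [self_mem_nhdsWithin] with c (hc : 0 < c)
  have hb : star m * m ∈ A := hM.star_mul_mem m hm m hm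
  have hmb : P.toFun m * (star m * m) ∈ M := by
    rw [← mul_assoc]; exact hM.mul_left _ h m hm
  have hsmul : c • (P.toFun m * approxUnit c (star m * m)) ∈ M := by
    rw [← mul_smul_comm, ← sub_mul_approxUnit (star_mul_self_nonneg m) hc, mul_sub,
      ← mul_assoc _ (star m * m)]
    exact M.sub_mem hmb (hM.mul_right _ (approxUnit_mem A hb) _ hmb)
  rw [Function.comp_apply, map_mul_right_of_isSlice hM hm (approxUnit_mem A hb),
    ← inv_smul_smul₀ hc.ne' (P.toFun m * _)]
  exact M.smul_of_tower_mem c⁻¹ hsmul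

end CondExp

end NCCartan

theorem statement_7_general {B : Type*} [NonUnitalCStarAlgebra B] [PartialOrder B] [StarOrderedRing B]
    (A : NonUnitalStarSubalgebra ℂ B) [IsClosed (A : Set B)]
    (P : CondExp (A : Set B))
    (hvc : VirtualCommutantsTrivial (A : Set B)) :
    ∀ M : Submodule ℂ B, IsSlice (A : Set B) M → ∀ m ∈ M, P.toFun m ∈ M := by
  intro M hM m hm
  exact P.map_mem_of_mul_star_mem hM hm (P.mul_star_mem_of_virtualCommutantsTrivial hvc hM hm hm)

/-- Lemma 3.16: if every virtual commutant of `A` in `B` has range in `A`, then every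
conditional expectation `P : B → A` preserves slices. -/
theorem statement_7 {B : Type*} [NonUnitalCStarAlgebra B] [PartialOrder B] [StarOrderedRing B]
    (A : NonUnitalStarSubalgebra ℂ B) [IsClosed (A : Set B)]
    (hnd : Nondegenerate (A : Set B))
    (P : CondExp (A : Set B))
    (hvc : VirtualCommutantsTrivial (A : Set B)) :
    ∀ M : Submodule ℂ B, IsSlice (A : Set B) M → ∀ m ∈ M, P.toFun m ∈ M :=
  statement_7_general A P hvc
end
end

section
/- Let A ⊆ B be a non-degenerate C*-inclusion with A commutative. Then A is maximal abelian in B (that is, every b ∈ B with b·a = a·b for all a ∈ A lies in A) if and only if for every closed two-sided ideal I of A, every multiplier τ ∈ M(IBI) that commutes with I satisfies τ·x ∈ I for all x ∈ I. -/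
open scoped MultiplierAlgebra

noncomputable section

open NCCartan

/-! If `A` is maximal abelian, let `τ` be a multiplier of `IBI` commuting with `I` and `x ∈ I`.
As `A` multiplies `IBI` into itself and `IBI` has zero annihilator, the two halves of `τ` are
`A`-module maps, so `a (τ x) = τ (a x) = τ (x a) = (τ x) a` for `a ∈ A`. Hence `τ x ∈ A`, and
along an approximate unit `e` of `I` we get `τ x = lim τ (x e) = lim (τ x) e ∈ I`.

Conversely, nondegeneracy makes an approximate unit of `A` an approximate unit of `B`, so `ABA`
is dense. An element `b` commuting with `A` is then a multiplier of `B = ABA` commuting with `A`,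
whence `b A ⊆ A`; applied to `b⋆` this gives `A b ⊆ A`, and `b = lim e b ∈ A`. -/

open Filter Topology

theorem exists_isApproximateUnit_selfAdjoint_contraction (D : Type*)
    [NonUnitalCStarAlgebra D] :
    ∃ l : Filter D, l.IsApproximateUnit ∧ ∀ᶠ e in l, IsSelfAdjoint e ∧ ‖e‖ ≤ 1 := by
  let _ := CStarAlgebra.spectralOrder D
  let _ := CStarAlgebra.spectralOrderedRing D
  have hl := CStarAlgebra.increasingApproximateUnit D
  exact ⟨_, hl.toIsApproximateUnit, hl.eventually_isSelfAdjoint.and hl.eventually_norm⟩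

theorem isClosed_setOf_tendsto_mul {B ι : Type*} [NonUnitalSeminormedRing B] {l : Filter ι}
    {u : ι → B} (hu : ∀ᶠ i in l, ‖u i‖ ≤ 1) :
    IsClosed {b : B | Tendsto (fun i => u i * b) l (𝓝 b)} := by
  refine isClosed_of_closure_subset fun b hb => Metric.tendsto_nhds.2 fun ε hε => ?_
  obtain ⟨c, hc, hbc⟩ := Metric.mem_closure_iff.1 hb (ε / 3) (by positivity)
  filter_upwards [hu, Metric.tendsto_nhds.1 hc (ε / 3) (by positivity)] with i hi hci
  have hmul : dist (u i * b) (u i * c) ≤ dist b c := by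
    rw [dist_eq_norm, dist_eq_norm, ← mul_sub]
    exact (norm_mul_le _ _).trans (mul_le_of_le_one_left (norm_nonneg _) hi)
  have := dist_triangle4 (u i * b) (u i * c) c b
  rw [dist_comm c b] at this
  linarith

theorem tendsto_zero_of_tendsto_star_mul_self {B α : Type*} [NonUnitalCStarAlgebra B]
    {l : Filter α} {f : α → B} (h : Tendsto (fun i => star (f i) * f i) l (𝓝 0)) :
    Tendsto f l (𝓝 0) := by
  rw [tendsto_zero_iff_norm_tendsto_zero] at h ⊢
  simpa [Function.comp_def, CStarRing.norm_star_mul_self, Real.sqrt_mul_self (norm_nonneg _)]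
    using (Real.continuous_sqrt.tendsto 0).comp h

theorem Set.MapsTo.closure_span {R E F : Type*} [Semiring R] [AddCommMonoid E] [Module R E]
    [TopologicalSpace E] [AddCommMonoid F] [Module R F] [TopologicalSpace F] {f : E →L[R] F}
    {s : Set E} {t : Set F} (h : Set.MapsTo f s t) :
    Set.MapsTo f (closure (Submodule.span R s)) (closure (Submodule.span R t)) := by
  refine fun x hx => map_mem_closure f.continuous hx fun y hy => ?_
  have := Submodule.mem_map_of_mem (f := f.toLinearMap) hy
  rw [Submodule.map_span] at this
  exact Submodule.span_mono (Set.image_subset_iff.2 h) this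

section ApproximateUnit

variable {B : Type*} [NonUnitalCStarAlgebra B] {S : NonUnitalStarSubalgebra ℂ B} {l : Filter S}

theorem tendsto_mul_coe_of_star_mul_self_mem (hl : l.IsApproximateUnit)
    (hsa : ∀ᶠ e in l, IsSelfAdjoint e ∧ ‖e‖ ≤ 1) {x : B} (hx : star x * x ∈ S) :
    Tendsto (fun e : S => x * e) l (𝓝 x) := by
  set h : B := star x * x with h_def
  have hh : Tendsto (fun e : S => (e : B) * h - h) l (𝓝 0) := by
    simpa using
      ((continuous_subtype_val.tendsto _).comp (hl.tendsto_mul_right ⟨h, hx⟩)).sub_const h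
  have hbdd : IsBoundedUnder (· ≤ ·) l (fun e : S => ‖(e : B)‖) :=
    isBoundedUnder_of_eventually_le (hsa.mono fun e he => he.2)
  have hsq : Tendsto (fun e : S => ((e : B) * h - h) * e - ((e : B) * h - h)) l (𝓝 0) := by
    simpa using (hh.zero_mul_isBoundedUnder_le hbdd).sub hh
  refine tendsto_sub_nhds_zero_iff.1 (tendsto_zero_of_tendsto_star_mul_self (hsq.congr' ?_))
  -- `(x e - x)⋆ (x e - x) = (e h - h) e - (e h - h)` for self-adjoint `e`
  filter_upwards [hsa] with e he
  have he' : star (e : B) = e := congrArg Subtype.val he.1.star_eq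
  rw [star_sub, star_mul, he', h_def]
  noncomm_ring

theorem tendsto_coe_mul_of_nondegenerate (hl : l.IsApproximateUnit)
    (hnorm : ∀ᶠ e in l, ‖e‖ ≤ 1) (hnd : Nondegenerate (S : Set B)) (b : B) :
    Tendsto (fun e : S => (e : B) * b) l (𝓝 b) := by
  have hspan : ∀ v ∈ Submodule.span ℂ {x : B | ∃ a ∈ (S : Set B), ∃ c : B, x = a * c},
      Tendsto (fun e : S => (e : B) * v) l (𝓝 v) := by
    intro v hv
    induction hv using Submodule.span_induction with
    | mem _ hx =>
      obtain ⟨a, ha, c, rfl⟩ := hx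
      simpa [Function.comp_def, mul_assoc] using
        ((continuous_subtype_val.tendsto _).comp (hl.tendsto_mul_right ⟨a, ha⟩)).mul_const c
    | zero => simpa using tendsto_const_nhds
    | add u v _ _ hu hv => simpa only [mul_add] using hu.add hv
    | smul c u _ hu => simpa only [mul_smul_comm] using hu.const_smul c
  exact closure_minimal hspan (isClosed_setOf_tendsto_mul hnorm) (hnd b)

theorem tendsto_mul_coe_of_nondegenerate (hl : l.IsApproximateUnit)
    (hsa : ∀ᶠ e in l, IsSelfAdjoint e ∧ ‖e‖ ≤ 1) (hnd : Nondegenerate (S : Set B))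
    (b : B) : Tendsto (fun e : S => b * e) l (𝓝 b) := by
  have := (continuous_star.tendsto _).comp
    (tendsto_coe_mul_of_nondegenerate hl (hsa.mono fun _ he => he.2) hnd (star b))
  rw [star_star] at this
  refine this.congr' ?_
  filter_upwards [hsa] with e he
  have he' : star (e : B) = e := congrArg Subtype.val he.1.star_eq
  simp [he']

end ApproximateUnit

namespace NCCartan

variable {B : Type*} [NonUnitalCStarAlgebra B]

theorem IBISet_mul_left {A : Set B} (I : CIdealIn A) {a z : B} (ha : a ∈ A)
    (hz : z ∈ IBISet I.carrier) : a * z ∈ IBISet I.carrier := by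
  refine Set.MapsTo.closure_span (f := ContinuousLinearMap.mul ℂ B a) ?_ hz
  rintro _ ⟨p, hp, b, q, hq, rfl⟩
  exact ⟨a * p, I.mul_left a ha p hp, b, q, hq, by simp [mul_assoc]⟩

theorem IBISet_mul_right {A : Set B} (I : CIdealIn A) {a z : B} (ha : a ∈ A)
    (hz : z ∈ IBISet I.carrier) : z * a ∈ IBISet I.carrier := by
  refine Set.MapsTo.closure_span (f := (ContinuousLinearMap.mul ℂ B).flip a) ?_ hz
  rintro _ ⟨p, hp, b, q, hq, rfl⟩
  exact ⟨p, hp, b, q * a, I.mul_right a ha q hq, by simp [mul_assoc]⟩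

section Multiplier

variable {C : NonUnitalStarSubalgebra ℂ B} (τ : 𝓜(ℂ, C)) {m : B}

theorem coe_snd_mul_coe (y c : C) : (τ.snd y : B) * c = y * τ.fst c :=
  congrArg Subtype.val (τ.central y c)

theorem snd_mul_left (hm : ∀ z ∈ C, m * z ∈ C) (z : C) :
    (τ.snd ⟨m * z, hm z z.2⟩ : B) = m * τ.snd z := by
  set w : B := τ.snd ⟨m * z, hm z z.2⟩ - m * τ.snd z
  have hw : star w ∈ C := star_mem (sub_mem (SetLike.coe_mem _) (hm _ (SetLike.coe_mem _)))
  refine sub_eq_zero.1 ((CStarRing.mul_star_self_eq_zero_iff w).1 ?_)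
  have := coe_snd_mul_coe τ z ⟨_, hw⟩
  rw [sub_mul, coe_snd_mul_coe τ _ ⟨_, hw⟩, mul_assoc, ← this, mul_assoc]
  exact sub_self _

theorem fst_mul_right (hm : ∀ z ∈ C, z * m ∈ C) (z : C) :
    (τ.fst ⟨z * m, hm z z.2⟩ : B) = τ.fst z * m := by
  set w : B := τ.fst ⟨z * m, hm z z.2⟩ - τ.fst z * m
  have hw : star w ∈ C := star_mem (sub_mem (SetLike.coe_mem _) (hm _ (SetLike.coe_mem _)))
  refine sub_eq_zero.1 ((CStarRing.star_mul_self_eq_zero_iff w).1 ?_)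
  have := coe_snd_mul_coe τ ⟨_, hw⟩ z
  rw [mul_sub, ← coe_snd_mul_coe τ ⟨_, hw⟩, ← mul_assoc, this, mul_assoc]
  exact sub_self _

end Multiplier

/-- The ideal `I` is not assumed self-adjoint; this star-closed part of it is a C⋆-algebra, and
its approximate unit is the one that moves `τ x` into `I`. -/
def CIdealIn.starCore {A : Set B} (I : CIdealIn A) : NonUnitalStarSubalgebra ℂ B where
  carrier := {x | x ∈ I.carrier ∧ star x ∈ I.carrier}
  zero_mem' := ⟨I.zero_mem, by simpa using I.zero_mem⟩
  add_mem' hx hy := ⟨I.add_mem _ hx.1 _ hy.1, by simpa using I.add_mem _ hx.2 _ hy.2⟩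
  mul_mem' hx hy :=
    ⟨I.mul_left _ (I.subset hx.1) _ hy.1, by simpa using I.mul_left _ (I.subset hy.2) _ hx.2⟩
  smul_mem' c _ hx := ⟨I.smul_mem c _ hx.1, by simpa using I.smul_mem (star c) _ hx.2⟩
  star_mem' hx := ⟨hx.2, by simpa using hx.1⟩

instance {A : Set B} (I : CIdealIn A) : IsClosed (I.starCore : Set B) :=
  I.isClosed.inter (I.isClosed.preimage continuous_star)

section Ideal

variable {A : Set B} (I : CIdealIn A) {C : NonUnitalStarSubalgebra ℂ B} (τ : 𝓜(ℂ, C))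

theorem mul_mem_left_of_eq_IBISet (hC : (C : Set B) = IBISet I.carrier) {a : B}
    (ha : a ∈ A) : ∀ z ∈ C, a * z ∈ C := by
  intro z hz
  rw [← SetLike.mem_coe, hC] at hz ⊢
  exact IBISet_mul_left I ha hz

theorem mul_mem_right_of_eq_IBISet (hC : (C : Set B) = IBISet I.carrier) {a : B}
    (ha : a ∈ A) : ∀ z ∈ C, z * a ∈ C := by
  intro z hz
  rw [← SetLike.mem_coe, hC] at hz ⊢
  exact IBISet_mul_right I ha hz

theorem fst_commute_of_mem (hC : (C : Set B) = IBISet I.carrier)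
    (hcomm : ∀ a ∈ A, ∀ b ∈ A, a * b = b * a)
    (hτ : ∀ x : C, (x : B) ∈ I.carrier → τ.fst x = τ.snd x) {x : C} (hx : (x : B) ∈ I.carrier)
    {a : B} (ha : a ∈ A) : (τ.fst x : B) * a = a * τ.fst x := by
  have hL := mul_mem_left_of_eq_IBISet I hC ha
  have hR := mul_mem_right_of_eq_IBISet I hC ha
  have hxa : (⟨x * a, hR x x.2⟩ : C) = ⟨a * x, hL x x.2⟩ :=
    Subtype.ext (hcomm _ (I.subset hx) a ha)
  calc (τ.fst x : B) * a = τ.fst ⟨x * a, hR x x.2⟩ := (fst_mul_right τ hR x).symm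
    _ = τ.snd ⟨a * x, hL x x.2⟩ := by rw [hxa, hτ _ (I.mul_left a ha _ hx)]
    _ = a * τ.fst x := by rw [snd_mul_left τ hL x, hτ x hx]

end Ideal

theorem fst_mem_of_mem {A : NonUnitalStarSubalgebra ℂ B} (I : CIdealIn (A : Set B))
    {C : NonUnitalStarSubalgebra ℂ B} (hC : (C : Set B) = IBISet I.carrier) (τ : 𝓜(ℂ, C))
    {x : C} (hx : (x : B) ∈ I.carrier) (hA : (τ.fst x : B) ∈ A) :
    (τ.fst x : B) ∈ I.carrier := by
  obtain ⟨l, hl, hsa⟩ := exists_isApproximateUnit_selfAdjoint_contraction I.starCore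
  have := hl.neBot
  have hR (e : I.starCore) := mul_mem_right_of_eq_IBISet I hC (I.subset e.2.1)
  have hxx : star (x : B) * x ∈ I.starCore := by
    have := I.mul_left _ (star_mem (I.subset hx)) _ hx
    exact ⟨this, by simpa using this⟩
  have hlim : Tendsto (fun e : I.starCore => (τ.fst ⟨x * e, hR e x x.2⟩ : B)) l (𝓝 (τ.fst x)) :=
    (continuous_subtype_val.tendsto _).comp ((τ.fst.continuous.tendsto x).comp
      (tendsto_subtype_rng.2 (tendsto_mul_coe_of_star_mul_self_mem hl hsa hxx)))
  refine I.isClosed.mem_of_tendsto hlim (Eventually.of_forall fun e => ?_)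
  rw [fst_mul_right τ (hR e) x]
  exact I.mul_left _ hA _ e.2.1

theorem commutingMultipliersTrivial_of_forall_commute_mem {A : NonUnitalStarSubalgebra ℂ B}
    (hcomm : ∀ a ∈ A, ∀ b ∈ A, a * b = b * a)
    (hmax : ∀ b : B, (∀ a ∈ A, b * a = a * b) → b ∈ A) :
    CommutingMultipliersTrivial (A : Set B) := fun I _ hC τ hτ _ hx =>
  fst_mem_of_mem I hC τ hx (hmax _ fun _ ha => fst_commute_of_mem I τ hC hcomm hτ hx ha)

section Nondegenerate

variable (A : NonUnitalStarSubalgebra ℂ B) [IsClosed (A : Set B)]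

def CIdealIn.self : CIdealIn (A : Set B) where
  carrier := A
  subset := subset_rfl
  zero_mem := ZeroMemClass.zero_mem A
  add_mem _ hx _ hy := AddMemClass.add_mem hx hy
  smul_mem c _ hx := SMulMemClass.smul_mem c hx
  mul_left _ ha _ hx := mul_mem ha hx
  mul_right _ ha _ hx := mul_mem hx ha
  isClosed := ‹_›

variable {A}

theorem IBISet_eq_univ (hnd : Nondegenerate (A : Set B)) : IBISet (A : Set B) = Set.univ := by
  obtain ⟨l, hl, hsa⟩ := exists_isApproximateUnit_selfAdjoint_contraction A
  have := hl.neBot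
  refine Set.eq_univ_of_forall fun b => isClosed_closure.mem_of_tendsto
    (tendsto_coe_mul_of_nondegenerate hl (hsa.mono fun _ he => he.2) hnd b)
    (Eventually.of_forall fun e => ?_)
  exact isClosed_closure.mem_of_tendsto (tendsto_mul_coe_of_nondegenerate hl hsa hnd (e * b))
    (Eventually.of_forall fun e' =>
      subset_closure (Submodule.subset_span ⟨e, e.2, b, e', e'.2, rfl⟩))

theorem CommutingMultipliersTrivial.mul_mem_of_commute (hnd : Nondegenerate (A : Set B))
    (hA : CommutingMultipliersTrivial (A : Set B)) {b : B} (hb : ∀ a ∈ A, b * a = a * b)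
    {a : B} (ha : a ∈ A) : b * a ∈ A := by
  have := hA (CIdealIn.self A) ⊤ (by simp [CIdealIn.self, IBISet_eq_univ hnd])
    ((⟨b, trivial⟩ : (⊤ : NonUnitalStarSubalgebra ℂ B)) : 𝓜(ℂ, _))
    (fun z hz => Subtype.ext (by simpa using hb z hz)) ⟨a, trivial⟩ ha
  simpa [CIdealIn.self] using this

theorem CommutingMultipliersTrivial.mem_of_commute (hnd : Nondegenerate (A : Set B))
    (hA : CommutingMultipliersTrivial (A : Set B)) {b : B} (hb : ∀ a ∈ A, b * a = a * b) :
    b ∈ A := by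
  have hstar : ∀ a ∈ A, star b * a = a * star b := fun a ha => by
    simpa using congrArg star (hb (star a) (star_mem ha)).symm
  have hAb : ∀ a ∈ A, a * b ∈ A := fun a ha => by
    simpa using star_mem (hA.mul_mem_of_commute hnd hstar (star_mem ha))
  obtain ⟨l, hl, hsa⟩ := exists_isApproximateUnit_selfAdjoint_contraction A
  have := hl.neBot
  exact IsClosed.mem_of_tendsto ‹_›
    (tendsto_coe_mul_of_nondegenerate hl (hsa.mono fun _ he => he.2) hnd b)
    (Eventually.of_forall fun e => hAb e e.2)

end Nondegenerate

end NCCartan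

theorem statement_15_general {B : Type*} [NonUnitalCStarAlgebra B]
    (A : NonUnitalStarSubalgebra ℂ B) [IsClosed (A : Set B)]
    (hnd : Nondegenerate (A : Set B))
    (hcomm : ∀ a ∈ A, ∀ b ∈ A, a * b = b * a) :
    (∀ b : B, (∀ a ∈ A, b * a = a * b) → b ∈ A) ↔
      CommutingMultipliersTrivial (A : Set B) :=
  ⟨commutingMultipliersTrivial_of_forall_commute_mem hcomm, fun hA _ => hA.mem_of_commute hnd⟩

/-- For a non-degenerate inclusion `A ⊆ B` with `A` commutative: `A` is maximal abelian in
`B` if and only if, for every closed two-sided ideal `I` of `A`, every multiplier of `IBI`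
commuting with `I` maps `I` into `I`. -/
theorem statement_15 {B : Type*} [NonUnitalCStarAlgebra B] [PartialOrder B] [StarOrderedRing B]
    (A : NonUnitalStarSubalgebra ℂ B) [IsClosed (A : Set B)]
    (hnd : Nondegenerate (A : Set B))
    (hcomm : ∀ a ∈ A, ∀ b ∈ A, a * b = b * a) :
    (∀ b : B, (∀ a ∈ A, b * a = a * b) → b ∈ A) ↔
      CommutingMultipliersTrivial (A : Set B) :=
  statement_15_general A hnd hcomm
end
end

section
/- Let A ⊆ B be a non-degenerate C*-inclusion and M ⊆ B a slice. Then M is contained in A if and only if the closed linear span of {m·n : m, n ∈ M} equals M. Moreover, if the closed linear span of {m·n : m, n ∈ M} equals M, then M* = M and M is a closed two-sided ideal of A. -/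
open scoped MultiplierAlgebra

noncomputable section

open NCCartan

/-! If `star x * x` lies in a closed *-subalgebra `S`, then `x` is a limit of products `x * e`
with `e = f (star x * x) ∈ S` for `f t = t / (t + δ)`: indeed
`‖x - x e‖² ≤ 2 ‖x* x - x* x e‖ ≤ 2 δ`. For a slice `M`, the elements `a ∈ A` with `a, a* ∈ M`
form such a subalgebra. If `M ⊆ A`, this writes every `m ∈ M` as a limit of `m e ∈ M·M`, and `m*`
as a limit of `e m* ∈ M·A ⊆ M`. Conversely, if `M` lies in the closed span of `M·M`, then
`m m* ∈ M·(M·M*) ⊆ M·A ⊆ M`, so `m*` is a limit of `m* e ∈ M*·M ⊆ A`. -/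

section Approximation

variable {B : Type*} [NonUnitalCStarAlgebra B]

lemma norm_sub_mul_sq_le_two_mul {x e : B} (he : IsSelfAdjoint e) (he₁ : ‖e‖ ≤ 1) :
    ‖x - x * e‖ ^ 2 ≤ 2 * ‖star x * x - star x * x * e‖ := by
  set d := star x * x - star x * x * e
  have hd : star (x - x * e) * (x - x * e) = d - e * d := by
    simp only [d, star_sub, star_mul, he.star_eq]
    noncomm_ring
  calc ‖x - x * e‖ ^ 2 = ‖d - e * d‖ := by rw [← hd, CStarRing.norm_star_mul_self, sq]
    _ ≤ ‖d‖ + ‖e‖ * ‖d‖ := (norm_sub_le _ _).trans (by gcongr; exact norm_mul_le _ _)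
    _ ≤ 2 * ‖d‖ := by nlinarith [norm_nonneg d]

variable [PartialOrder B] [StarOrderedRing B]

lemma norm_cfcₙ_div_add_le_one {a : B} (ha : 0 ≤ a) {δ : ℝ} (hδ : 0 < δ) :
    ‖cfcₙ (fun t : ℝ => t / (t + δ)) a‖ ≤ 1 := by
  refine norm_cfcₙ_le fun t ht => ?_
  have ht₀ : 0 ≤ t := quasispectrum_nonneg_of_nonneg a ha t ht
  rw [Real.norm_eq_abs, abs_of_nonneg (by positivity), div_le_one (by positivity)]
  linarith

lemma norm_sub_mul_cfcₙ_div_add_le {a : B} (ha : 0 ≤ a) {δ : ℝ} (hδ : 0 < δ) :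
    ‖a - a * cfcₙ (fun t : ℝ => t / (t + δ)) a‖ ≤ δ := by
  have hcont : ContinuousOn (fun t : ℝ => t / (t + δ)) (quasispectrum ℝ a) :=
    continuousOn_id.div (by fun_prop) fun t ht =>
      (add_pos_of_nonneg_of_pos (quasispectrum_nonneg_of_nonneg a ha t ht) hδ).ne'
  have hsub : a - a * cfcₙ (fun t : ℝ => t / (t + δ)) a
      = cfcₙ (fun t : ℝ => t - t * (t / (t + δ))) a := by
    rw [cfcₙ_sub _ _ a, cfcₙ_mul _ _ a, cfcₙ_id' ℝ a]
  rw [hsub]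
  refine norm_cfcₙ_le fun t ht => ?_
  have ht₀ : 0 ≤ t := quasispectrum_nonneg_of_nonneg a ha t ht
  have : t - t * (t / (t + δ)) = δ * (t / (t + δ)) := by field_simp; ring
  rw [this, Real.norm_eq_abs, abs_of_nonneg (by positivity)]
  exact mul_le_of_le_one_right hδ.le ((div_le_one (by positivity)).mpr (by linarith))

lemma mem_closure_mul_image_of_star_mul_self_mem (S : NonUnitalStarSubalgebra ℂ B)
    [IsClosed (S : Set B)] {x : B} (hx : star x * x ∈ S) :
    x ∈ closure ((x * ·) '' (S : Set B)) := by
  rw [Metric.mem_closure_iff]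
  intro ε hε
  have ha : 0 ≤ star x * x := star_mul_self_nonneg x
  have hδ : 0 < ε ^ 2 / 4 := by positivity
  set e := cfcₙ (fun t : ℝ => t / (t + ε ^ 2 / 4)) (star x * x)
  refine ⟨x * e, ⟨e, cfcₙ_mem _ hx, rfl⟩, ?_⟩
  have hsq : ‖x - x * e‖ ^ 2 < ε ^ 2 :=
    calc ‖x - x * e‖ ^ 2 ≤ 2 * ‖star x * x - star x * x * e‖ :=
          norm_sub_mul_sq_le_two_mul (cfcₙ_predicate _ _) (norm_cfcₙ_div_add_le_one ha hδ)
      _ ≤ 2 * (ε ^ 2 / 4) := by gcongr; exact norm_sub_mul_cfcₙ_div_add_le ha hδ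
      _ < ε ^ 2 := by linarith
  rw [dist_eq_norm]
  exact lt_of_pow_lt_pow_left₀ 2 hε.le hsq

end Approximation

namespace NCCartan

variable {B : Type*} [NonUnitalCStarAlgebra B]

def closedSpanMul (M : Submodule ℂ B) : Set B :=
  closure (Submodule.span ℂ {z : B | ∃ m ∈ M, ∃ n ∈ M, z = m * n} : Set B)

lemma closedSpanMul_subset {M N : Submodule ℂ B} (hN : IsClosed (N : Set B))
    (h : ∀ m ∈ M, ∀ n ∈ M, m * n ∈ N) : closedSpanMul M ⊆ N :=
  closure_minimal (Submodule.span_le.mpr <| by rintro _ ⟨m, hm, n, hn, rfl⟩; exact h m hm n hn) hN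

lemma mul_mem_closedSpanMul {M : Submodule ℂ B} {m n : B} (hm : m ∈ M) (hn : n ∈ M) :
    m * n ∈ closedSpanMul M :=
  subset_closure (Submodule.subset_span ⟨m, hm, n, hn, rfl⟩)

namespace IsSlice

variable {A : NonUnitalStarSubalgebra ℂ B} {M : Submodule ℂ B}

def core (hM : IsSlice (A : Set B) M) : NonUnitalStarSubalgebra ℂ B where
  carrier := {x | x ∈ A ∧ x ∈ M ∧ star x ∈ M}
  add_mem' := fun ⟨hxA, hxM, hxM'⟩ ⟨hyA, hyM, hyM'⟩ =>
    ⟨add_mem hxA hyA, add_mem hxM hyM, by rw [star_add]; exact add_mem hxM' hyM'⟩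
  zero_mem' := ⟨zero_mem A, zero_mem M, by rw [star_zero]; exact zero_mem M⟩
  mul_mem' := fun {x y} ⟨hxA, _, hxM'⟩ ⟨hyA, hyM, _⟩ =>
    ⟨mul_mem hxA hyA, hM.mul_left x hxA y hyM,
      by rw [star_mul]; exact hM.mul_left _ (star_mem hyA) _ hxM'⟩
  smul_mem' := fun c x ⟨hxA, hxM, hxM'⟩ =>
    ⟨SMulMemClass.smul_mem c hxA, M.smul_mem c hxM, by rw [star_smul]; exact M.smul_mem _ hxM'⟩
  star_mem' := fun {x} ⟨hxA, hxM, hxM'⟩ => ⟨star_mem hxA, hxM', by rwa [star_star]⟩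

lemma isClosed_core (hM : IsSlice (A : Set B) M) [IsClosed (A : Set B)] :
    IsClosed (hM.core : Set B) :=
  ‹IsClosed (A : Set B)›.inter (hM.isClosed.inter (hM.isClosed.preimage continuous_star))

lemma mem_core_of_isSelfAdjoint (hM : IsSlice (A : Set B) M) {x : B} (hxA : x ∈ A) (hxM : x ∈ M)
    (hx : IsSelfAdjoint x) : x ∈ hM.core :=
  ⟨hxA, hxM, by rwa [hx.star_eq]⟩

lemma mul_star_mem_of_mem_closedSpanMul (hM : IsSlice (A : Set B) M) {x m : B}
    (hx : x ∈ closedSpanMul M) (hm : m ∈ M) : x * star m ∈ M :=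
  closedSpanMul_subset (N := M.comap (LinearMap.mulRight ℂ (star m)))
    (hM.isClosed.preimage (continuous_mul_const _))
    (fun p hp q hq => by
      simpa [mul_assoc] using hM.mul_right _ (hM.mul_star_mem q hq m hm) p hp) hx

lemma star_mul_self_mem_core (hM : IsSlice (A : Set B) M) (hMA : (M : Set B) ⊆ A) {m : B}
    (hm : m ∈ M) : star m * m ∈ hM.core :=
  hM.mem_core_of_isSelfAdjoint (mul_mem (star_mem (hMA hm)) (hMA hm))
    (hM.mul_left _ (star_mem (hMA hm)) m hm) (.star_mul_self m)

def toCIdealIn (hM : IsSlice (A : Set B) M) (hMA : (M : Set B) ⊆ A) : CIdealIn (A : Set B) where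
  carrier := M
  subset := hMA
  zero_mem := M.zero_mem
  add_mem _ hx _ hy := M.add_mem hx hy
  smul_mem c _ hx := M.smul_mem c hx
  mul_left := hM.mul_left
  mul_right := hM.mul_right
  isClosed := hM.isClosed

variable [PartialOrder B] [StarOrderedRing B] [IsClosed (A : Set B)]

lemma closedSpanMul_eq_of_subset (hM : IsSlice (A : Set B) M) (hMA : (M : Set B) ⊆ A) :
    closedSpanMul M = M := by
  refine (closedSpanMul_subset hM.isClosed fun m hm n hn => hM.mul_left m (hMA hm) n hn).antisymm
    fun m hm => ?_
  have := hM.isClosed_core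
  have hcore := hM.star_mul_self_mem_core hMA hm
  refine closure_minimal ?_ isClosed_closure (mem_closure_mul_image_of_star_mul_self_mem _ hcore)
  rintro _ ⟨e, he, rfl⟩
  exact mul_mem_closedSpanMul hm he.2.1

lemma subset_of_closedSpanMul_eq (hM : IsSlice (A : Set B) M) (h : closedSpanMul M = M) :
    (M : Set B) ⊆ A := by
  intro m hm
  have := hM.isClosed_core
  have hcore : star (star m) * star m ∈ hM.core := by
    rw [star_star]
    exact hM.mem_core_of_isSelfAdjoint (hM.mul_star_mem m hm m hm)
      (hM.mul_star_mem_of_mem_closedSpanMul (h ▸ hm) hm) (.mul_star_self m)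
  have hstar : star m ∈ (A : Set B) := by
    refine closure_minimal ?_ ‹IsClosed (A : Set B)›
      (mem_closure_mul_image_of_star_mul_self_mem _ hcore)
    rintro _ ⟨e, he, rfl⟩
    exact hM.star_mul_mem m hm e he.2.1
  simpa using star_mem hstar

lemma star_mem_of_subset (hM : IsSlice (A : Set B) M) (hMA : (M : Set B) ⊆ A) {m : B}
    (hm : m ∈ M) : star m ∈ M := by
  have := hM.isClosed_core
  have hcore := hM.star_mul_self_mem_core hMA hm
  refine hM.isClosed.closure_subset <|
    map_mem_closure continuous_star (mem_closure_mul_image_of_star_mul_self_mem _ hcore) ?_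
  rintro _ ⟨e, he, rfl⟩
  rw [star_mul]
  exact hM.mul_right _ (star_mem (hMA hm)) _ he.2.2

end IsSlice

end NCCartan

theorem statement_17_general {B : Type*} [NonUnitalCStarAlgebra B] [PartialOrder B] [StarOrderedRing B]
    (A : NonUnitalStarSubalgebra ℂ B) [IsClosed (A : Set B)]
    (M : Submodule ℂ B) (hM : IsSlice (A : Set B) M)
    (MM : Set B)
    (hMM : MM = closure ((Submodule.span ℂ
      {z : B | ∃ m ∈ M, ∃ n ∈ M, z = m * n} : Submodule ℂ B) : Set B)) :
    ((M : Set B) ⊆ (A : Set B) ↔ MM = (M : Set B)) ∧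
    (MM = (M : Set B) →
      ((fun m : B => star m) '' (M : Set B) = (M : Set B)) ∧
      ∃ I : CIdealIn (A : Set B), I.carrier = (M : Set B)) := by
  obtain rfl : MM = closedSpanMul M := hMM
  have hiff : (M : Set B) ⊆ A ↔ closedSpanMul M = M :=
    ⟨hM.closedSpanMul_eq_of_subset, hM.subset_of_closedSpanMul_eq⟩
  refine ⟨hiff, fun h => ⟨?_, hM.toCIdealIn (hiff.mpr h), rfl⟩⟩
  have hstar : ∀ m ∈ M, star m ∈ M := fun m => hM.star_mem_of_subset (hiff.mpr h)
  exact (Set.image_subset_iff.mpr hstar).antisymm fun m hm => ⟨star m, hstar m hm, star_star m⟩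

/-- (From the proof of Proposition 3.9.) A slice `M` is contained in `A` if and only if the
closed linear span of `M·M` equals `M`; in that case `M* = M` and `M` is a closed two-sided
ideal of `A`. -/
theorem statement_17 {B : Type*} [NonUnitalCStarAlgebra B] [PartialOrder B] [StarOrderedRing B]
    (A : NonUnitalStarSubalgebra ℂ B) [IsClosed (A : Set B)]
    (hnd : Nondegenerate (A : Set B))
    (M : Submodule ℂ B) (hM : IsSlice (A : Set B) M)
    (MM : Set B)
    (hMM : MM = closure ((Submodule.span ℂ
      {z : B | ∃ m ∈ M, ∃ n ∈ M, z = m * n} : Submodule ℂ B) : Set B)) :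
    ((M : Set B) ⊆ (A : Set B) ↔ MM = (M : Set B)) ∧
    (MM = (M : Set B) →
      ((fun m : B => star m) '' (M : Set B) = (M : Set B)) ∧
      ∃ I : CIdealIn (A : Set B), I.carrier = (M : Set B)) :=
  statement_17_general A M hM MM hMM
end
end
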